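/- arXiv:2402.08160 — 10 statements merged into one kernel-verified Lean document; each statement's English description precedes it below -/
import Mathlib

section
/- Let p be an odd prime, d ≥ 1, and s = (s_1,…,s_d) a tuple of nonzero integers with weight w = |s_1| + … + |s_d|. Then in ℤ/pℤ one has the reversal relation M_p(s_d, s_{d-1}, …, s_1) = (−1)^w · M_p(−s_1, −s_2, …, −s_d). -/
open Finset

/-- The finite multiple mixed value `M_p(s)` in `ℤ/pℤ`: the sum over integers
`p > n_1 > … > n_d > 0` with `n_j` even whenever `s_j > 0` and `n_j` odd whenever
`s_j < 0`, of `∏_j (n_j)^(-|s_j|)`, inverses taken in `ℤ/pℤ`. -/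
def Mp (p d : ℕ) (s : Fin d → ℤ) : ZMod p :=
  ∑ m ∈ univ.filter (fun m : Fin d → Fin p =>
      (∀ i j : Fin d, i < j → (m j : ℕ) < (m i : ℕ)) ∧
      (∀ j, 0 < (m j : ℕ)) ∧
      (∀ j, (m j : ℕ) % 2 = if 0 < s j then 0 else 1)),
    ∏ j, (((m j : ℕ) : ZMod p))⁻¹ ^ (s j).natAbs

/-- Reversal relation: for odd prime `p` and nonzero integers `s_1, …, s_d`,
`M_p(s_d, …, s_1) = (-1)^w M_p(-s_1, …, -s_d)` where `w = |s_1| + ⋯ + |s_d|`. -/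
theorem stmt1 (p : ℕ) (hp : p.Prime) (hp2 : p ≠ 2) (d : ℕ) (hd : 1 ≤ d)
    (s : Fin d → ℤ) (hs : ∀ j, s j ≠ 0) :
    Mp p d (fun j => s j.rev) =
      (-1 : ZMod p) ^ (∑ j, (s j).natAbs) * Mp p d (fun j => -(s j)) := by
  haveI : Fact p.Prime := ⟨hp⟩
  have hp0 : 0 < p := hp.pos
  have hpodd : p % 2 = 1 := Nat.odd_iff.mp (hp.odd_of_ne_two hp2)
  unfold Mp
  rw [Finset.mul_sum]
  refine Finset.sum_nbij'
    (fun m => fun j => (⟨(p - (m j.rev : ℕ)) % p, Nat.mod_lt _ hp0⟩ : Fin p))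
    (fun m => fun j => (⟨(p - (m j.rev : ℕ)) % p, Nat.mod_lt _ hp0⟩ : Fin p))
    ?_ ?_ ?_ ?_ ?_
  · intro m hm
    simp only [mem_filter, mem_univ, true_and] at hm ⊢
    obtain ⟨h1, h2, h3⟩ := hm
    have hmod : ∀ j : Fin d, (p - (m j : ℕ)) % p = p - (m j : ℕ) := fun j =>
      Nat.mod_eq_of_lt (by have := (m j).isLt; have := h2 j; omega)
    refine ⟨?_, ?_, ?_⟩
    · intro i j hij
      have hlt : j.rev < i.rev := Fin.rev_lt_rev.mpr hij
      have := h1 j.rev i.rev hlt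
      have hi := (m i.rev).isLt
      have hj := (m j.rev).isLt
      try dsimp only
      rw [hmod, hmod]
      omega
    · intro j
      have := (m j.rev).isLt
      have := h2 j.rev
      try dsimp only
      rw [hmod]
      omega
    · intro j
      have h3' := h3 j.rev
      simp only [Fin.rev_rev] at h3'
      have hne := hs j
      have hlt := (m j.rev).isLt
      have hpos := h2 j.rev
      try dsimp only
      rw [hmod]
      split_ifs with h
      · rw [if_neg (by omega)] at h3'
        omega
      · rw [if_pos (by omega)] at h3'
        omega
  · intro m hm
    simp only [mem_filter, mem_univ, true_and] at hm ⊢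
    obtain ⟨h1, h2, h3⟩ := hm
    have hmod : ∀ j : Fin d, (p - (m j : ℕ)) % p = p - (m j : ℕ) := fun j =>
      Nat.mod_eq_of_lt (by have := (m j).isLt; have := h2 j; omega)
    refine ⟨?_, ?_, ?_⟩
    · intro i j hij
      have hlt : j.rev < i.rev := Fin.rev_lt_rev.mpr hij
      have := h1 j.rev i.rev hlt
      have hi := (m i.rev).isLt
      have hj := (m j.rev).isLt
      try dsimp only
      rw [hmod, hmod]
      omega
    · intro j
      have := (m j.rev).isLt
      have := h2 j.rev
      try dsimp only
      rw [hmod]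
      omega
    · intro j
      have h3' := h3 j.rev
      have hne := hs j.rev
      have hlt := (m j.rev).isLt
      have hpos := h2 j.rev
      try dsimp only
      rw [hmod]
      split_ifs with h
      · rw [if_neg (by omega)] at h3'
        omega
      · rw [if_pos (by omega)] at h3'
        omega
  · intro m hm
    simp only [mem_filter, mem_univ, true_and] at hm
    obtain ⟨h1, h2, h3⟩ := hm
    funext j
    ext
    try dsimp only
    simp only [Fin.rev_rev]
    have ha := (m j).isLt
    have hb := h2 j
    have h5 : (p - (m j : ℕ)) % p = p - (m j : ℕ) := Nat.mod_eq_of_lt (by omega)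
    rw [h5]
    have h6 : (p - (p - (m j : ℕ))) % p = p - (p - (m j : ℕ)) := Nat.mod_eq_of_lt (by omega)
    rw [h6]
    omega
  · intro m hm
    simp only [mem_filter, mem_univ, true_and] at hm
    obtain ⟨h1, h2, h3⟩ := hm
    funext j
    ext
    try dsimp only
    simp only [Fin.rev_rev]
    have ha := (m j).isLt
    have hb := h2 j
    have h5 : (p - (m j : ℕ)) % p = p - (m j : ℕ) := Nat.mod_eq_of_lt (by omega)
    rw [h5]
    have h6 : (p - (p - (m j : ℕ))) % p = p - (p - (m j : ℕ)) := Nat.mod_eq_of_lt (by omega)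
    rw [h6]
    omega
  · intro m hm
    simp only [mem_filter, mem_univ, true_and] at hm
    obtain ⟨h1, h2, h3⟩ := hm
    have hmod : ∀ j : Fin d, (p - (m j : ℕ)) % p = p - (m j : ℕ) := fun j =>
      Nat.mod_eq_of_lt (by have := (m j).isLt; have := h2 j; omega)
    try dsimp only
    have key : ∀ j : Fin d, ((((p - (m j.rev : ℕ)) % p : ℕ) : ZMod p))⁻¹ ^ (-(s j)).natAbs
        = (-1 : ZMod p) ^ (s j).natAbs * (((m j.rev : ℕ) : ZMod p))⁻¹ ^ (s j).natAbs := by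
      intro j
      rw [hmod j.rev]
      have hle : (m j.rev : ℕ) ≤ p := le_of_lt (m j.rev).isLt
      have hcast : (((p - (m j.rev : ℕ) : ℕ) : ZMod p)) = -(((m j.rev : ℕ) : ZMod p)) := by
        rw [Nat.cast_sub hle, ZMod.natCast_self, zero_sub]
      rw [hcast, inv_neg, neg_pow, Int.natAbs_neg]
    simp only [key]
    rw [Finset.prod_mul_distrib, Finset.prod_pow_eq_pow_sum]
    rw [← mul_assoc, ← pow_add]
    rw [Even.neg_one_pow (by exact ⟨∑ j, (s j).natAbs, by ring⟩), one_mul]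
    calc ∏ j : Fin d, (((m j : ℕ) : ZMod p))⁻¹ ^ (s j.rev).natAbs
        = ∏ j : Fin d, (((m (Fin.revPerm j).rev : ℕ) : ZMod p))⁻¹ ^ (s (Fin.revPerm j)).natAbs := by
          apply Finset.prod_congr rfl
          intro j _
          simp [Fin.rev_rev]
      _ = ∏ j : Fin d, (((m j.rev : ℕ) : ZMod p))⁻¹ ^ (s j).natAbs :=
          Equiv.prod_comp Fin.revPerm (fun j => (((m j.rev : ℕ) : ZMod p))⁻¹ ^ (s j).natAbs)
end

section
/- Let p be an odd prime, d ≥ 1, and s = (s_1,…,s_d) ∈ ℕ^d with weight w = s_1 + … + s_d. Then in ℤ/pℤ one has t_p(s_d, s_{d-1}, …, s_1) = (−1)^w · ζ^{(2)}_p(s_1, …, s_d). -/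
set_option maxRecDepth 20000

private lemma negval (p : ℕ) (a : Fin p) (ha : 0 < (a : ℕ)) :
    ((-a : Fin p) : ℕ) = p - (a : ℕ) := by
  rw [Fin.neg_def]
  have := a.isLt
  simp only [Fin.val_mk]
  rw [Nat.mod_eq_of_lt (by omega)]




open Finset

/-- `t_p(s) ∈ ℤ/pℤ`: the sum over integers `p > n_1 > … > n_d > 0` with all `n_j`
odd, of `∏_j n_j^{-s_j}`, inverses taken in `ℤ/pℤ`. -/
def tp (p d : ℕ) (s : Fin d → ℕ) : ZMod p :=
  ∑ m ∈ univ.filter (fun m : Fin d → Fin p =>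
      (∀ i j : Fin d, i < j → (m j : ℕ) < (m i : ℕ)) ∧
      (∀ j, 0 < (m j : ℕ)) ∧
      (∀ j, (m j : ℕ) % 2 = 1)),
    ∏ j, (((m j : ℕ) : ZMod p))⁻¹ ^ (s j)

/-- `ζ^{(2)}_p(s) ∈ ℤ/pℤ`: the sum over integers `p > n_1 > … > n_d > 0` with all
`n_j` even, of `∏_j n_j^{-s_j}`, inverses taken in `ℤ/pℤ`. -/
def zeta2p (p d : ℕ) (s : Fin d → ℕ) : ZMod p :=
  ∑ m ∈ univ.filter (fun m : Fin d → Fin p =>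
      (∀ i j : Fin d, i < j → (m j : ℕ) < (m i : ℕ)) ∧
      (∀ j, 0 < (m j : ℕ)) ∧
      (∀ j, (m j : ℕ) % 2 = 0)),
    ∏ j, (((m j : ℕ) : ZMod p))⁻¹ ^ (s j)

/-- For an odd prime `p` and positive integers `s_1, …, s_d`,
`t_p(s_d, …, s_1) = (-1)^w ζ^{(2)}_p(s_1, …, s_d)` where `w = s_1 + ⋯ + s_d`. -/
theorem stmt2 (p : ℕ) (hp : p.Prime) (hp2 : p ≠ 2) (d : ℕ) (hd : 1 ≤ d)
    (s : Fin d → ℕ) (hs : ∀ j, 0 < s j) :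
    tp p d (fun j => s j.rev) = (-1 : ZMod p) ^ (∑ j, s j) * zeta2p p d s := by
  rw [tp, zeta2p]
  show (∑ m ∈ _, ∏ j, _⁻¹ ^ (s (Fin.rev j))) = _

  haveI : Fact p.Prime := ⟨hp⟩
  have hpodd : p % 2 = 1 := Nat.odd_iff.mp (hp.odd_of_ne_two hp2)
  rw [Finset.mul_sum]
  refine Finset.sum_nbij' (i := fun m j => -(m j.rev)) (j := fun m j => -(m j.rev))
    ?_ ?_ ?_ ?_ ?_
  · intro m hm
    simp only [mem_filter, mem_univ, true_and] at hm ⊢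
    obtain ⟨hmono, hpos, hodd⟩ := hm
    have hv : ∀ j : Fin d, ((-(m j) : Fin p) : ℕ) = p - (m j : ℕ) :=
      fun j => negval p _ (hpos j)
    refine ⟨?_, ?_, ?_⟩
    · intro i j hij
      rw [hv, hv]
      have h1 := hmono j.rev i.rev (Fin.rev_lt_rev.mpr hij)
      have h2 := (m i.rev).isLt
      have h3 := (m j.rev).isLt
      omega
    · intro j
      rw [hv]
      have := (m j.rev).isLt
      omega
    · intro j
      rw [hv]
      have h1 := (m j.rev).isLt
      have h2 := hodd j.rev
      omega
  · intro m hm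
    simp only [mem_filter, mem_univ, true_and] at hm ⊢
    obtain ⟨hmono, hpos, heven⟩ := hm
    have hv : ∀ j : Fin d, ((-(m j) : Fin p) : ℕ) = p - (m j : ℕ) :=
      fun j => negval p _ (hpos j)
    refine ⟨?_, ?_, ?_⟩
    · intro i j hij
      rw [hv, hv]
      have h1 := hmono j.rev i.rev (Fin.rev_lt_rev.mpr hij)
      have h2 := (m i.rev).isLt
      have h3 := (m j.rev).isLt
      omega
    · intro j
      rw [hv]
      have := (m j.rev).isLt
      omega
    · intro j
      rw [hv]
      have h1 := (m j.rev).isLt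
      have h2 := heven j.rev
      have h3 := hpos j.rev
      omega
  · intro m hm
    funext j
    simp [Fin.rev_rev, neg_neg]
  · intro m hm
    funext j
    simp [Fin.rev_rev, neg_neg]
  · intro m hm
    simp only [mem_filter, mem_univ, true_and] at hm
    obtain ⟨hmono, hpos, hodd⟩ := hm
    have hv : ∀ j : Fin d, ((((-(m j.rev) : Fin p)) : ℕ) : ZMod p)
        = -(((m j.rev : ℕ) : ZMod p)) := by
      intro j
      rw [negval p _ (hpos j.rev), Nat.cast_sub (m j.rev).isLt.le,
        ZMod.natCast_self, zero_sub]
    calc ∏ j, (((m j : ℕ) : ZMod p))⁻¹ ^ (s j.rev)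
        = ∏ j, (((m j.rev : ℕ) : ZMod p))⁻¹ ^ (s j) := by
          rw [← Equiv.prod_comp (Fin.revPerm : Equiv.Perm (Fin d))
            (fun j => (((m j : ℕ) : ZMod p))⁻¹ ^ (s j.rev))]
          simp [Fin.rev_rev]
      _ = (-1 : ZMod p) ^ (∑ j, s j) *
          ∏ j, ((((-(m j.rev) : Fin p) : ℕ) : ZMod p))⁻¹ ^ (s j) := by
          have key : ∀ j : Fin d, ((((-(m j.rev) : Fin p) : ℕ) : ZMod p))⁻¹ ^ (s j)
              = (-1 : ZMod p) ^ (s j) * (((m j.rev : ℕ) : ZMod p))⁻¹ ^ (s j) := by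
            intro j
            rw [hv, inv_neg, neg_eq_neg_one_mul, mul_pow]
          simp only [key]
          rw [Finset.prod_mul_distrib, Finset.prod_pow_eq_pow_sum, ← mul_assoc, ← pow_add,
            Even.neg_one_pow ⟨∑ j, s j, rfl⟩, one_mul]
end

section
/- Let p be an odd prime and s = (s_1,…,s_d) ∈ ℕ^d with d even and weight w = s_1 + … + s_d. Then in ℤ/pℤ: T_p(s_d,…,s_1) = (−1)^w · T_p(s_1,…,s_d) and S_p(s_d,…,s_1) = (−1)^w · S_p(s_1,…,s_d). -/
/-!
The reflection `(n_1, …, n_d) ↦ (p - n_d, …, p - n_1)` maps the index set of a sum with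
parity pattern `c` onto that with pattern `j ↦ 1 - c_{d+1-j}` (as `p` is odd), and turns each
factor `n_j^{-s_j}` into `(-1)^{s_j} n_j^{-s_j}` (as `p - n ≡ -n`). For even `d`, the parity
patterns of `T_p` and of `S_p` are each fixed by `c ↦ 1 - c ∘ rev`.
-/

open Finset

/-- `T_p(s) ∈ ℤ/pℤ`: the sum over integers `p > n_1 > … > n_d > 0` with
`n_j ≡ d - j + 1 (mod 2)` (for `1 ≤ j ≤ d`), of `∏_j n_j^{-s_j}`.
Indices here are 0-based, so the parity condition reads `n_j ≡ d - j (mod 2)`. -/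
def Tp (p d : ℕ) (s : Fin d → ℕ) : ZMod p :=
  ∑ m ∈ univ.filter (fun m : Fin d → Fin p =>
      (∀ i j : Fin d, i < j → (m j : ℕ) < (m i : ℕ)) ∧
      (∀ j, 0 < (m j : ℕ)) ∧
      (∀ j : Fin d, (m j : ℕ) % 2 = (d - (j : ℕ)) % 2)),
    ∏ j, (((m j : ℕ) : ZMod p))⁻¹ ^ (s j)

/-- `S_p(s) ∈ ℤ/pℤ`: the sum over integers `p > n_1 > … > n_d > 0` with
`n_j ≡ d - j (mod 2)` (for `1 ≤ j ≤ d`), of `∏_j n_j^{-s_j}`.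
Indices here are 0-based, so the parity condition reads `n_j ≡ d - j - 1 (mod 2)`. -/
def Sp (p d : ℕ) (s : Fin d → ℕ) : ZMod p :=
  ∑ m ∈ univ.filter (fun m : Fin d → Fin p =>
      (∀ i j : Fin d, i < j → (m j : ℕ) < (m i : ℕ)) ∧
      (∀ j, 0 < (m j : ℕ)) ∧
      (∀ j : Fin d, (m j : ℕ) % 2 = (d - (j : ℕ) - 1) % 2)),
    ∏ j, (((m j : ℕ) : ZMod p))⁻¹ ^ (s j)

lemma Fin.val_neg_of_pos {n : ℕ} {a : Fin n} (ha : 0 < (a : ℕ)) : ((-a : Fin n) : ℕ) = n - a := by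
  rw [Fin.val_neg']
  exact Nat.mod_eq_of_lt (by omega)

lemma Fin.natCast_val_neg {n : ℕ} (a : Fin n) :
    (((-a : Fin n) : ℕ) : ZMod n) = -((a : ℕ) : ZMod n) := by
  rw [Fin.val_neg', ZMod.natCast_mod, Nat.cast_sub a.isLt.le, ZMod.natCast_self, zero_sub]

def IsAdmissible {p d : ℕ} (c : Fin d → ℕ) (m : Fin d → Fin p) : Prop :=
  (∀ i j : Fin d, i < j → (m j : ℕ) < (m i : ℕ)) ∧ (∀ j, 0 < (m j : ℕ)) ∧
    ∀ j, (m j : ℕ) % 2 = c j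

instance {p d : ℕ} (c : Fin d → ℕ) : DecidablePred (IsAdmissible (p := p) c) := fun m => by
  unfold IsAdmissible
  infer_instance

def parityHarmonicSum (p : ℕ) {d : ℕ} (c s : Fin d → ℕ) : ZMod p :=
  ∑ m ∈ univ.filter (IsAdmissible (p := p) c), ∏ j, (((m j : ℕ) : ZMod p))⁻¹ ^ (s j)

lemma Tp_eq_parityHarmonicSum (p d : ℕ) (s : Fin d → ℕ) :
    Tp p d s = parityHarmonicSum p (fun j => (d - j) % 2) s := rfl

lemma Sp_eq_parityHarmonicSum (p d : ℕ) (s : Fin d → ℕ) :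
    Sp p d s = parityHarmonicSum p (fun j => (d - j - 1) % 2) s := rfl

namespace parityHarmonicSum

variable {p d : ℕ}

def reflect (m : Fin d → Fin p) : Fin d → Fin p := fun j => -m j.rev

lemma reflect_involutive : Function.Involutive (reflect (p := p) (d := d)) := by
  intro m
  funext j
  simp [reflect]

lemma isAdmissible_reflect (hp : p % 2 = 1) {c c' : Fin d → ℕ} (hc : ∀ j, c j.rev + c' j = 1)
    {m : Fin d → Fin p} (hm : IsAdmissible c m) : IsAdmissible c' (reflect m) := by
  obtain ⟨hanti, hpos, hpar⟩ := hm
  have hval : ∀ j, (reflect m j : ℕ) = p - m j.rev := fun j => Fin.val_neg_of_pos (hpos j.rev)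
  have hlt : ∀ j, (m j : ℕ) < p := fun j => (m j).isLt
  refine ⟨fun i j hij => ?_, fun j => ?_, fun j => ?_⟩
  · have := hanti j.rev i.rev (Fin.rev_lt_rev.mpr hij)
    rw [hval, hval]
    have := hlt i.rev
    omega
  · rw [hval]
    have := hlt j.rev
    omega
  · rw [hval]
    have := hpar j.rev
    have := hc j
    have := hlt j.rev
    omega

lemma prod_reflect [Fact p.Prime] (s : Fin d → ℕ) (m : Fin d → Fin p) :
    ∏ j, ((reflect m j : ℕ) : ZMod p)⁻¹ ^ s j.rev =
      (-1 : ZMod p) ^ (∑ j, s j) * ∏ j, ((m j : ℕ) : ZMod p)⁻¹ ^ s j := by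
  calc ∏ j, ((reflect m j : ℕ) : ZMod p)⁻¹ ^ s j.rev
      = ∏ j, (-((m j.rev : ℕ) : ZMod p)⁻¹) ^ s j.rev := by
        simp only [reflect, Fin.natCast_val_neg, inv_neg]
    _ = ∏ j, (-((m j : ℕ) : ZMod p)⁻¹) ^ s j :=
        Fintype.prod_equiv Fin.revPerm _ _ (fun _ => rfl)
    _ = ∏ j, ((-1 : ZMod p) ^ s j * ((m j : ℕ) : ZMod p)⁻¹ ^ s j) :=
        prod_congr rfl fun j _ => neg_pow _ _
    _ = (-1 : ZMod p) ^ (∑ j, s j) * ∏ j, ((m j : ℕ) : ZMod p)⁻¹ ^ s j := by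
        rw [prod_mul_distrib, prod_pow_eq_pow_sum]

theorem rev_eq_neg_one_pow_mul (hp : p.Prime) (hp2 : p ≠ 2) {c c' : Fin d → ℕ}
    (hc : ∀ j, c j.rev + c' j = 1) (s : Fin d → ℕ) :
    parityHarmonicSum p c' (fun j => s j.rev) =
      (-1 : ZMod p) ^ (∑ j, s j) * parityHarmonicSum p c s := by
  have : Fact p.Prime := ⟨hp⟩
  have hodd : p % 2 = 1 := hp.eq_two_or_odd.resolve_left hp2
  have hc' : ∀ j, c' j.rev + c j = 1 := fun j => by rw [← hc j.rev, Fin.rev_rev, add_comm]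
  rw [parityHarmonicSum, parityHarmonicSum, mul_sum]
  refine sum_nbij' reflect reflect ?_ ?_ (fun m _ => reflect_involutive m)
    (fun m _ => reflect_involutive m) (fun m _ => ?_)
  · intro m hm
    rw [mem_filter] at hm ⊢
    exact ⟨mem_univ _, isAdmissible_reflect hodd hc' hm.2⟩
  · intro m hm
    rw [mem_filter] at hm ⊢
    exact ⟨mem_univ _, isAdmissible_reflect hodd hc hm.2⟩
  · rw [← prod_reflect, reflect_involutive m]

end parityHarmonicSum

theorem stmt3_general (p : ℕ) (hp : p.Prime) (hp2 : p ≠ 2) (d : ℕ)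
    (hde : Even d) (s : Fin d → ℕ) :
    Tp p d (fun j => s j.rev) = (-1 : ZMod p) ^ (∑ j, s j) * Tp p d s ∧
    Sp p d (fun j => s j.rev) = (-1 : ZMod p) ^ (∑ j, s j) * Sp p d s := by
  obtain ⟨k, rfl⟩ := hde
  simp only [Tp_eq_parityHarmonicSum, Sp_eq_parityHarmonicSum]
  have hrev : ∀ j : Fin (k + k), (j.rev : ℕ) = k + k - 1 - j := fun j => by rw [Fin.val_rev]; omega
  constructor
  · refine parityHarmonicSum.rev_eq_neg_one_pow_mul hp hp2 (fun j => ?_) s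
    rw [hrev]
    omega
  · refine parityHarmonicSum.rev_eq_neg_one_pow_mul hp hp2 (fun j => ?_) s
    rw [hrev]
    omega

/-- For an odd prime `p`, even depth `d` and positive integers `s_1, …, s_d` with
weight `w = s_1 + ⋯ + s_d`:
`T_p(s_d, …, s_1) = (-1)^w T_p(s_1, …, s_d)` and
`S_p(s_d, …, s_1) = (-1)^w S_p(s_1, …, s_d)`. -/
theorem stmt3 (p : ℕ) (hp : p.Prime) (hp2 : p ≠ 2) (d : ℕ) (hd : 1 ≤ d)
    (hde : Even d) (s : Fin d → ℕ) (hs : ∀ j, 0 < s j) :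
    Tp p d (fun j => s j.rev) = (-1 : ZMod p) ^ (∑ j, s j) * Tp p d s ∧
    Sp p d (fun j => s j.rev) = (-1 : ZMod p) ^ (∑ j, s j) * Sp p d s :=
  stmt3_general p hp hp2 d hde s
end

section
/- Let p be an odd prime and s = (s_1,…,s_d) ∈ ℕ^d with d odd and weight w = s_1 + … + s_d. Then in ℤ/pℤ: T_p(s_d,…,s_1) = (−1)^w · S_p(s_1,…,s_d) and S_p(s_d,…,s_1) = (−1)^w · T_p(s_1,…,s_d). -/
open Finset

lemma flip_sum (p : ℕ) (hp : p.Prime) (d : ℕ) (s : Fin d → ℕ)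
    (cL cR : Fin d → ℕ)
    (hc1 : ∀ (j : Fin d) (n : ℕ), n < p → 0 < n → n % 2 = cR (Fin.rev j) → (p - n) % 2 = cL j)
    (hc2 : ∀ (j : Fin d) (n : ℕ), n < p → 0 < n → n % 2 = cL (Fin.rev j) → (p - n) % 2 = cR j) :
    (∑ m ∈ univ.filter (fun m : Fin d → Fin p =>
        (∀ i j : Fin d, i < j → (m j : ℕ) < (m i : ℕ)) ∧
        (∀ j, 0 < (m j : ℕ)) ∧
        (∀ j : Fin d, (m j : ℕ) % 2 = cL j)),
      ∏ j, (((m j : ℕ) : ZMod p))⁻¹ ^ (s (Fin.rev j)))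
    = (-1 : ZMod p) ^ (∑ j, s j) *
      ∑ m ∈ univ.filter (fun m : Fin d → Fin p =>
        (∀ i j : Fin d, i < j → (m j : ℕ) < (m i : ℕ)) ∧
        (∀ j, 0 < (m j : ℕ)) ∧
        (∀ j : Fin d, (m j : ℕ) % 2 = cR j)),
      ∏ j, (((m j : ℕ) : ZMod p))⁻¹ ^ (s j) := by
  haveI : Fact p.Prime := ⟨hp⟩
  have hp0 : 0 < p := hp.pos
  rw [Finset.mul_sum]
  refine Finset.sum_bij'
    (i := fun m hm => fun j => (⟨p - (m (Fin.rev j) : ℕ), by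
      have hm' := (Finset.mem_filter.mp hm).2
      exact Nat.sub_lt hp0 (hm'.2.1 (Fin.rev j))⟩ : Fin p))
    (j := fun m hm => fun j => (⟨p - (m (Fin.rev j) : ℕ), by
      have hm' := (Finset.mem_filter.mp hm).2
      exact Nat.sub_lt hp0 (hm'.2.1 (Fin.rev j))⟩ : Fin p))
    ?_ ?_ ?_ ?_ ?_
  · intro m hm
    have hm' := (Finset.mem_filter.mp hm).2
    simp only [Finset.mem_filter, Finset.mem_univ, true_and]
    refine ⟨?_, ?_, ?_⟩
    · intro a b hab
      have h1 := hm'.1 (Fin.rev b) (Fin.rev a) (Fin.rev_lt_rev.mpr hab)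
      have h2 := (m (Fin.rev a)).isLt
      have h3 := (m (Fin.rev b)).isLt
      omega
    · intro j
      have := (m (Fin.rev j)).isLt
      omega
    · intro j
      exact hc2 j _ (m (Fin.rev j)).isLt (hm'.2.1 _) (hm'.2.2 _)
  · intro m hm
    have hm' := (Finset.mem_filter.mp hm).2
    simp only [Finset.mem_filter, Finset.mem_univ, true_and]
    refine ⟨?_, ?_, ?_⟩
    · intro a b hab
      have h1 := hm'.1 (Fin.rev b) (Fin.rev a) (Fin.rev_lt_rev.mpr hab)
      have h2 := (m (Fin.rev a)).isLt
      have h3 := (m (Fin.rev b)).isLt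
      omega
    · intro j
      have := (m (Fin.rev j)).isLt
      omega
    · intro j
      exact hc1 j _ (m (Fin.rev j)).isLt (hm'.2.1 _) (hm'.2.2 _)
  · intro m hm
    funext j
    have := (m j).isLt
    apply Fin.ext
    simp only [Fin.rev_rev]
    omega
  · intro m hm
    funext j
    have := (m j).isLt
    apply Fin.ext
    simp only [Fin.rev_rev]
    omega
  · intro m hm
    have hm' := (Finset.mem_filter.mp hm).2
    have key : ∀ j : Fin d,
        (((p - (m (Fin.rev j) : ℕ) : ℕ) : ZMod p)) = -(((m (Fin.rev j) : ℕ) : ZMod p)) := by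
      intro j
      have hle : (m (Fin.rev j) : ℕ) ≤ p := le_of_lt (m (Fin.rev j)).isLt
      rw [Nat.cast_sub hle, ZMod.natCast_self, zero_sub]
    calc ∏ j, (((m j : ℕ) : ZMod p))⁻¹ ^ (s (Fin.rev j))
        = ∏ j, (((m (Fin.rev j) : ℕ) : ZMod p))⁻¹ ^ (s j) := by
          rw [← Equiv.prod_comp Fin.revPerm
            (fun j => (((m j : ℕ) : ZMod p))⁻¹ ^ (s (Fin.rev j)))]
          simp [Fin.rev_rev]
      _ = ∏ j, ((-1 : ZMod p) ^ (s j) *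
            ((((p - (m (Fin.rev j) : ℕ) : ℕ) : ZMod p))⁻¹) ^ (s j)) := by
          refine Finset.prod_congr rfl fun j _ => ?_
          rw [key j, inv_neg, neg_pow ((((m (Fin.rev j) : ℕ) : ZMod p))⁻¹), ← mul_assoc, ← mul_pow]; norm_num
      _ = (-1 : ZMod p) ^ (∑ j, s j) *
            ∏ j, ((((p - (m (Fin.rev j) : ℕ) : ℕ) : ZMod p))⁻¹) ^ (s j) := by
          rw [Finset.prod_mul_distrib, Finset.prod_pow_eq_pow_sum]


/-- For an odd prime `p`, odd depth `d` and positive integers `s_1, …, s_d` with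
weight `w = s_1 + ⋯ + s_d`:
`T_p(s_d, …, s_1) = (-1)^w S_p(s_1, …, s_d)` and
`S_p(s_d, …, s_1) = (-1)^w T_p(s_1, …, s_d)`. -/
theorem stmt4 (p : ℕ) (hp : p.Prime) (hp2 : p ≠ 2) (d : ℕ) (hd : 1 ≤ d)
    (hdo : Odd d) (s : Fin d → ℕ) (hs : ∀ j, 0 < s j) :
    Tp p d (fun j => s j.rev) = (-1 : ZMod p) ^ (∑ j, s j) * Sp p d s ∧
    Sp p d (fun j => s j.rev) = (-1 : ZMod p) ^ (∑ j, s j) * Tp p d s := by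
  have hpo : p % 2 = 1 := hp.eq_two_or_odd.resolve_left hp2
  have hdo' : d % 2 = 1 := Nat.odd_iff.mp hdo
  constructor
  · rw [Tp, Sp]
    refine flip_sum p hp d s _ _ ?_ ?_
    · intro j n hn hn0 hmod
      have hj := j.isLt
      rw [Fin.val_rev] at hmod
      omega
    · intro j n hn hn0 hmod
      have hj := j.isLt
      rw [Fin.val_rev] at hmod
      omega
  · rw [Tp, Sp]
    refine flip_sum p hp d s _ _ ?_ ?_
    · intro j n hn hn0 hmod
      have hj := j.isLt
      rw [Fin.val_rev] at hmod
      omega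
    · intro j n hn hn0 hmod
      have hj := j.isLt
      rw [Fin.val_rev] at hmod
      omega
end

section
/- Let p be an odd prime. Then in ℤ/pℤ: Σ_{0 < k < p, k even} 1/k = −q_p and Σ_{0 < k < p, k odd} 1/k = q_p, where q_p is the Fermat quotient of 2. (In the paper's notation, S_p(1) = ζ^{(2)}_p(1) = −q_p and t_p(1) = T_p(1) = q_p.) -/
/-!
Pairing `k` with `p - k` shows `∑_{0<k<p} 1/k = 0` in `ℤ/pℤ`, so the even part `E` and the odd
part `O` satisfy `E + O = 0`. For `0 < k < p`, `C(p,k)/p = C(p-1,k-1)/k ≡ (-1)^(k-1)/k`, so summing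
the exact quotients `C(p,k)/p` gives `O - E ≡ (2^p - 2)/p = 2 q_p`.
-/

open Finset

/-- The Fermat quotient of 2: the residue class mod `p` of `(2^{p-1} - 1)/p`. -/
def qp (p : ℕ) : ZMod p := (((2 ^ (p - 1) - 1) / p : ℕ) : ZMod p)

theorem Nat.sum_Ioo_choose {n : ℕ} (hn : 0 < n) : ∑ k ∈ Ioo 0 n, n.choose k = 2 ^ n - 2 := by
  have h := Nat.sum_range_choose n
  rw [range_eq_Ico, sum_Ico_succ_top (Nat.zero_le n), sum_eq_sum_Ico_succ_bot hn,
    Nat.choose_zero_right, Nat.choose_self, Ico_add_one_left_eq_Ioo] at h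
  omega

theorem Nat.Prime.choose_div_self_mul {p k : ℕ} (hp : p.Prime) (hk0 : 0 < k) (hkp : k < p) :
    p.choose k / p * k = (p - 1).choose (k - 1) := by
  have h := Nat.add_one_mul_choose_eq (p - 1) (k - 1)
  rw [Nat.sub_add_cancel hp.pos, Nat.sub_add_cancel hk0] at h
  rw [Nat.div_mul_right_comm (hp.dvd_choose_self hk0.ne' hkp), ← h, Nat.mul_div_cancel_left _ hp.pos]

theorem Nat.Prime.sum_Ioo_choose_div_self {p : ℕ} (hp : p.Prime) (hp2 : p ≠ 2) :
    ∑ k ∈ Ioo 0 p, p.choose k / p = 2 * ((2 ^ (p - 1) - 1) / p) := by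
  have hfermat : p ∣ 2 ^ (p - 1) - 1 :=
    (Nat.modEq_iff_dvd' Nat.one_le_two_pow).1
      (Nat.ModEq.pow_card_sub_one_eq_one hp ((Nat.coprime_primes Nat.prime_two hp).2 hp2.symm)).symm
  refine Nat.eq_of_mul_eq_mul_left hp.pos ?_
  calc p * ∑ k ∈ Ioo 0 p, p.choose k / p = ∑ k ∈ Ioo 0 p, p.choose k := by
        rw [mul_sum]
        refine sum_congr rfl fun k hk => Nat.mul_div_cancel' ?_
        exact hp.dvd_choose_self (mem_Ioo.1 hk).1.ne' (mem_Ioo.1 hk).2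
    _ = 2 * (2 ^ (p - 1) - 1) := by
        rw [Nat.sum_Ioo_choose hp.pos, Nat.mul_sub, mul_one, ← pow_succ', Nat.succ_eq_add_one,
          Nat.sub_add_cancel hp.pos]
    _ = p * (2 * ((2 ^ (p - 1) - 1) / p)) := by rw [Nat.mul_left_comm, Nat.mul_div_cancel' hfermat]

theorem Finset.sum_filter_mod_two_eq_zero_add_sum_filter_mod_two_eq_one {M : Type*}
    [AddCommMonoid M] (s : Finset ℕ) (f : ℕ → M) :
    ∑ k ∈ s with k % 2 = 0, f k + ∑ k ∈ s with k % 2 = 1, f k = ∑ k ∈ s, f k := by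
  simpa only [Nat.mod_two_ne_zero] using sum_filter_add_sum_filter_not s (· % 2 = 0) f

theorem Finset.sum_neg_one_pow_succ_mul {R : Type*} [Ring R] (s : Finset ℕ) (f : ℕ → R) :
    ∑ k ∈ s, (-1) ^ (k + 1) * f k = ∑ k ∈ s with k % 2 = 1, f k - ∑ k ∈ s with k % 2 = 0, f k := by
  rw [← sum_filter_mod_two_eq_zero_add_sum_filter_mod_two_eq_one s, sub_eq_add_neg, add_comm,
    ← sum_neg_distrib]
  congr 1 <;> refine sum_congr rfl fun k hk => ?_
  · have hk := (mem_filter.1 hk).2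
    rw [(Nat.even_iff.2 (by omega : (k + 1) % 2 = 0)).neg_one_pow, one_mul]
  · have hk := (mem_filter.1 hk).2
    rw [(Nat.odd_iff.2 (by omega : (k + 1) % 2 = 1)).neg_one_pow, neg_one_mul]

namespace ZMod

variable {p : ℕ} [Fact p.Prime]

theorem natCast_choose_pred {j : ℕ} (hj : j < p) :
    (((p - 1).choose j : ℕ) : ZMod p) = (-1) ^ j := by
  induction j with
  | zero => simp
  | succ j ih =>
    have hp := (Fact.out : p.Prime)
    have pascal : p.choose (j + 1) = (p - 1).choose j + (p - 1).choose (j + 1) := by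
      have h := Nat.choose_succ_succ' (p - 1) j
      rwa [Nat.sub_add_cancel hp.pos] at h
    have hzero : ((p.choose (j + 1) : ℕ) : ZMod p) = 0 :=
      (natCast_eq_zero_iff _ _).2 (hp.dvd_choose_self j.succ_ne_zero hj)
    rw [pascal, Nat.cast_add, ih (by omega)] at hzero
    rw [pow_succ]
    linear_combination hzero

theorem natCast_ne_zero_of_pos_of_lt {k : ℕ} (hk0 : 0 < k) (hkp : k < p) : (k : ZMod p) ≠ 0 := by
  rw [Ne, natCast_eq_zero_iff]
  exact Nat.not_dvd_of_pos_of_lt hk0 hkp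

theorem natCast_choose_div_self {k : ℕ} (hk0 : 0 < k) (hkp : k < p) :
    ((p.choose k / p : ℕ) : ZMod p) = (-1) ^ (k + 1) * (k : ZMod p)⁻¹ := by
  rw [eq_mul_inv_iff_mul_eq₀ (natCast_ne_zero_of_pos_of_lt hk0 hkp), ← Nat.cast_mul,
    (Fact.out : p.Prime).choose_div_self_mul hk0 hkp, natCast_choose_pred (by omega),
    show k + 1 = k - 1 + 2 by omega, pow_add, neg_one_sq, mul_one]

theorem sum_Ioo_inv_eq_zero (hp2 : p ≠ 2) : ∑ k ∈ Ioo 0 p, (k : ZMod p)⁻¹ = 0 := by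
  have hodd : p % 2 = 1 := Nat.odd_iff.1 ((Fact.out : p.Prime).odd_of_ne_two hp2)
  refine sum_involution (fun k _ => p - k) (fun k hk => ?_) (fun k hk _ => ?_)
    (fun k hk => ?_) (fun k hk => ?_) <;> rw [mem_Ioo] at hk
  · rw [Nat.cast_sub hk.2.le, natCast_self, zero_sub, inv_neg, add_neg_cancel]
  · omega
  · rw [mem_Ioo]; omega
  · omega

end ZMod

/-- For an odd prime `p`, in `ℤ/pℤ`:
`∑_{0<k<p, k even} 1/k = -q_p` and `∑_{0<k<p, k odd} 1/k = q_p`. -/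
theorem stmt8 (p : ℕ) (hp : p.Prime) (hp2 : p ≠ 2) :
    (∑ k ∈ (Finset.Ioo 0 p).filter (fun k => k % 2 = 0), ((k : ZMod p))⁻¹ = - qp p) ∧
    (∑ k ∈ (Finset.Ioo 0 p).filter (fun k => k % 2 = 1), ((k : ZMod p))⁻¹ = qp p) := by
  have := Fact.mk hp
  set E := ∑ k ∈ (Ioo 0 p).filter (fun k => k % 2 = 0), ((k : ZMod p))⁻¹
  set O := ∑ k ∈ (Ioo 0 p).filter (fun k => k % 2 = 1), ((k : ZMod p))⁻¹
  have hsum : E + O = 0 := by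
    rw [sum_filter_mod_two_eq_zero_add_sum_filter_mod_two_eq_one, ZMod.sum_Ioo_inv_eq_zero hp2]
  have hdiff : O - E = 2 * qp p := by
    rw [← sum_neg_one_pow_succ_mul,
      ← sum_congr rfl fun k hk => ZMod.natCast_choose_div_self (mem_Ioo.1 hk).1 (mem_Ioo.1 hk).2,
      ← Nat.cast_sum, hp.sum_Ioo_choose_div_self hp2, qp, Nat.cast_mul, Nat.cast_ofNat]
  have hO : O = qp p := by
    refine mul_left_cancel₀ (ZMod.natCast_ne_zero_of_pos_of_lt two_pos (hp.two_le.lt_of_ne' hp2)) ?_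
    linear_combination hsum + hdiff
  exact ⟨by linear_combination hsum - hO, hO⟩
end

section
/- Let p be an odd prime. Then in ℤ/pℤ: Σ_{0 < k < p, k even} (−1)^{k/2} / k = −q_p / 2 and Σ_{0 < k < p, k odd} (−1)^{(k+1)/2} / k = −(−1)^{(p−1)/2} · q_p / 2, where q_p is the Fermat quotient of 2. (In the paper's notation, ζ^{(2)}_p(1̄) = S_p(1̄) = −q_p/2 and t_p(1̄) = T_p(1̄) = −(−1)^{(p−1)/2} q_p/2.) -/
/-!
Write `p = 2m + 1` and `z = (1 + i)^p` in `ℤ[i]`. The binomial theorem gives `z = 1 + i^p + p B`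
with `B = ∑_{0<k<p} (C(p,k)/p) i^k`, and `C(p,k)/p ≡ (-1)^(k-1)/k (mod p)`, so `Re B` and `Im B`
reduce to minus the two sums of the theorem. On the other hand `z² = (2i)^p` is purely imaginary
and `N(z) = 2^p`, so `(Re z)² = (Im z)² = 2^(p-1)`. Squaring `Re z = 1 + p Re B` and
`Im z = (-1)^m + p Im B` then gives `q_p ≡ 2 Re B ≡ 2 (-1)^m Im B (mod p)`.
-/

open Finset Zsqrtd

local notation "ℤ[i]" => GaussianInt

theorem Nat.Prime.cast_choose_sub_one {p : ℕ} (hp : p.Prime) {k : ℕ} (hk : k < p) :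
    ((p - 1).choose k : ZMod p) = (-1) ^ k := by
  obtain ⟨n, rfl⟩ : ∃ n, p = n + 1 := ⟨p - 1, (Nat.sub_add_cancel hp.one_le).symm⟩
  induction k with
  | zero => simp
  | succ k ih =>
    have hpascal : ((n.choose k : ℕ) : ZMod (n + 1)) + n.choose (k + 1) = 0 := by
      rw [← Nat.cast_add, ← Nat.choose_succ_succ', ZMod.natCast_eq_zero_iff]
      exact hp.dvd_choose_self k.succ_ne_zero hk
    rw [Nat.add_sub_cancel] at ih ⊢
    rw [pow_succ, ← ih (by omega)]
    linear_combination hpascal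

theorem ZMod.natCast_choose_div_self_s9 {p : ℕ} [Fact p.Prime] {k : ℕ} (hk0 : 0 < k) (hkp : k < p) :
    ((p.choose k / p : ℕ) : ZMod p) = (-1) ^ (k - 1) * (k : ZMod p)⁻¹ := by
  have hp : p.Prime := Fact.out
  have hk : (k : ZMod p) ≠ 0 := by
    rw [Ne, ZMod.natCast_eq_zero_iff]
    exact Nat.not_dvd_of_pos_of_lt hk0 hkp
  have hchoose : p * (p - 1).choose (k - 1) = p * (p.choose k / p * k) := by
    rw [← mul_assoc, Nat.mul_div_cancel' (hp.dvd_choose_self hk0.ne' hkp)]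
    simpa [Nat.sub_add_cancel hp.one_le, Nat.sub_add_cancel hk0] using
      Nat.add_one_mul_choose_eq (p - 1) (k - 1)
  rw [← hp.cast_choose_sub_one (by omega : k - 1 < p), Nat.eq_of_mul_eq_mul_left hp.pos hchoose,
    Nat.cast_mul]
  exact (mul_inv_cancel_right₀ hk _).symm

def binomialQuotient {R : Type*} [Semiring R] (p : ℕ) (x : R) : R :=
  ∑ k ∈ Ioo 0 p, ((p.choose k / p : ℕ) : R) * x ^ k

theorem one_add_pow_prime {R : Type*} [CommSemiring R] {p : ℕ} (hp : p.Prime) (x : R) :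
    (1 + x) ^ p = 1 + x ^ p + p * binomialQuotient p x := by
  have hIoo : ∑ k ∈ Ioo 0 p, x ^ k * (p.choose k : R) = p * binomialQuotient p x := by
    rw [binomialQuotient, mul_sum]
    refine sum_congr rfl fun k hk => ?_
    obtain ⟨hk0, hkp⟩ := mem_Ioo.mp hk
    rw [← mul_assoc, ← Nat.cast_mul, Nat.mul_div_cancel' (hp.dvd_choose_self hk0.ne' hkp),
      mul_comm]
  rw [add_comm 1 x, add_pow, sum_range_succ, range_eq_Ico,
    sum_eq_sum_Ico_succ_bot hp.pos, Ico_add_one_left_eq_Ioo]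
  simp only [one_pow, mul_one, Nat.choose_zero_right, Nat.choose_self, pow_zero, Nat.cast_one]
  rw [hIoo]
  ring

theorem qp_eq_of_sq_eq {p : ℕ} (hp : p ≠ 0) {r ε e : ℤ} (hr : r ^ 2 = 2 ^ (p - 1))
    (hε : ε ^ 2 = 1) (he : r = ε + p * e) : qp p = 2 * ε * e := by
  have hsub : (2 : ℤ) ^ (p - 1) - 1 = p * (2 * ε * e + p * e ^ 2) := by
    rw [← hr, he]
    linear_combination hε
  have hquot : (((2 ^ (p - 1) - 1) / p : ℕ) : ℤ) = 2 * ε * e + p * e ^ 2 := by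
    rw [Int.natCast_div, Nat.cast_sub Nat.one_le_two_pow]
    push_cast
    rw [hsub, Int.mul_ediv_cancel_left _ (by exact_mod_cast hp)]
  rw [qp, ← Int.cast_natCast, hquot]
  push_cast
  rw [ZMod.natCast_self]
  ring

theorem Zsqrtd.re_sum {d : ℤ} {ι : Type*} (s : Finset ι) (f : ι → ℤ√d) :
    (∑ j ∈ s, f j).re = ∑ j ∈ s, (f j).re :=
  map_sum (AddMonoidHom.mk' Zsqrtd.re Zsqrtd.re_add) f s

theorem Zsqrtd.im_sum {d : ℤ} {ι : Type*} (s : Finset ι) (f : ι → ℤ√d) :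
    (∑ j ∈ s, f j).im = ∑ j ∈ s, (f j).im :=
  map_sum (AddMonoidHom.mk' Zsqrtd.im Zsqrtd.im_add) f s

namespace GaussianInt

theorem sqrtd_pow (k : ℕ) :
    (sqrtd : ℤ[i]) ^ k = (((-1) ^ (k / 2) : ℤ) : ℤ[i]) * sqrtd ^ (k % 2) := by
  conv_lhs => rw [← Nat.div_add_mod k 2, pow_add, pow_mul, sq, dmuld]
  push_cast
  rfl

theorem re_sqrtd_pow (k : ℕ) :
    ((sqrtd : ℤ[i]) ^ k).re = if k % 2 = 0 then (-1) ^ (k / 2) else 0 := by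
  rw [sqrtd_pow, re_smul]
  rcases Nat.mod_two_eq_zero_or_one k with h | h <;> simp [h]

theorem im_sqrtd_pow (k : ℕ) :
    ((sqrtd : ℤ[i]) ^ k).im = if k % 2 = 1 then (-1) ^ (k / 2) else 0 := by
  rw [sqrtd_pow, im_smul]
  rcases Nat.mod_two_eq_zero_or_one k with h | h <;> simp [h]

theorem sq_re_and_sq_im_one_add_sqrtd_pow_odd (m : ℕ) :
    ((1 + sqrtd : ℤ[i]) ^ (2 * m + 1)).re ^ 2 = 2 ^ (2 * m) ∧
      ((1 + sqrtd : ℤ[i]) ^ (2 * m + 1)).im ^ 2 = 2 ^ (2 * m) := by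
  set z := (1 + sqrtd : ℤ[i]) ^ (2 * m + 1)
  have hnorm : z.re ^ 2 + z.im ^ 2 = 2 * 2 ^ (2 * m) := by
    have : z.norm = 2 ^ (2 * m + 1) := by
      change normMonoidHom _ = _
      rw [map_pow]
      simp [normMonoidHom, norm_def]
    simpa [norm_def, pow_succ, sq, mul_comm] using this
  have hsq : z.re ^ 2 - z.im ^ 2 = 0 := by
    have : (z ^ 2).re = 0 := by
      rw [← pow_mul, mul_comm, pow_mul, show (1 + sqrtd : ℤ[i]) ^ 2 = ((2 : ℤ) : ℤ[i]) * sqrtd by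
        ext <;> simp [sq], mul_pow, ← Int.cast_pow, re_smul, re_sqrtd_pow]
      simp [Nat.add_mod]
    simpa [sq, sub_eq_add_neg] using this
  constructor <;> linarith

theorem qp_eq_two_mul_re_binomialQuotient {m : ℕ} (hp : (2 * m + 1).Prime) :
    qp (2 * m + 1) = 2 * (binomialQuotient (2 * m + 1) (sqrtd : ℤ[i])).re := by
  have hre := (sq_re_and_sq_im_one_add_sqrtd_pow_odd m).1
  rw [one_add_pow_prime hp] at hre
  simpa using qp_eq_of_sq_eq (ε := 1) (e := (binomialQuotient (2 * m + 1) (sqrtd : ℤ[i])).re)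
    hp.ne_zero (by simpa using hre) (one_pow 2) (by simp [re_sqrtd_pow])

theorem qp_eq_two_mul_im_binomialQuotient {m : ℕ} (hp : (2 * m + 1).Prime) :
    qp (2 * m + 1) =
      2 * (-1) ^ m * (binomialQuotient (2 * m + 1) (sqrtd : ℤ[i])).im := by
  have him := (sq_re_and_sq_im_one_add_sqrtd_pow_odd m).2
  rw [one_add_pow_prime hp] at him
  simpa using qp_eq_of_sq_eq (ε := (-1) ^ m)
    (e := (binomialQuotient (2 * m + 1) (sqrtd : ℤ[i])).im) hp.ne_zero (by simpa using him)
    (by rw [← pow_mul, pow_mul', neg_one_sq, one_pow])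
    (by simp [im_sqrtd_pow, show (2 * m + 1) / 2 = m by omega])

theorem cast_re_binomialQuotient_sqrtd {p : ℕ} [Fact p.Prime] :
    ((binomialQuotient p (sqrtd : ℤ[i])).re : ZMod p) =
      -∑ k ∈ (Ioo 0 p).filter (fun k => k % 2 = 0), (-1 : ZMod p) ^ (k / 2) * (k : ZMod p)⁻¹ := by
  rw [binomialQuotient, re_sum, sum_filter, ← sum_neg_distrib]
  push_cast
  refine sum_congr rfl fun k hk => ?_
  obtain ⟨hk0, hkp⟩ := mem_Ioo.mp hk
  rw [← Int.cast_natCast (R := ℤ[i]), re_smul, re_sqrtd_pow, Int.cast_mul, Int.cast_natCast,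
    ZMod.natCast_choose_div_self_s9 hk0 hkp]
  rcases Nat.mod_two_eq_zero_or_one k with h | h
  · rw [if_pos h, if_pos h]
    push_cast
    rw [(Nat.odd_iff.mpr (by omega) : Odd (k - 1)).neg_one_pow]
    ring
  · simp [h]

theorem cast_im_binomialQuotient_sqrtd {p : ℕ} [Fact p.Prime] :
    ((binomialQuotient p (sqrtd : ℤ[i])).im : ZMod p) =
      -∑ k ∈ (Ioo 0 p).filter (fun k => k % 2 = 1),
        (-1 : ZMod p) ^ ((k + 1) / 2) * (k : ZMod p)⁻¹ := by
  rw [binomialQuotient, im_sum, sum_filter, ← sum_neg_distrib]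
  push_cast
  refine sum_congr rfl fun k hk => ?_
  obtain ⟨hk0, hkp⟩ := mem_Ioo.mp hk
  rw [← Int.cast_natCast (R := ℤ[i]), im_smul, im_sqrtd_pow, Int.cast_mul, Int.cast_natCast,
    ZMod.natCast_choose_div_self_s9 hk0 hkp]
  rcases Nat.mod_two_eq_zero_or_one k with h | h
  · simp [h]
  · rw [if_pos h, if_pos h]
    push_cast
    rw [(Nat.even_iff.mpr (by omega) : Even (k - 1)).neg_one_pow,
      show (k + 1) / 2 = k / 2 + 1 by omega, pow_succ]
    ring

end GaussianInt

/-- For an odd prime `p`, in `ℤ/pℤ`: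
`∑_{0<k<p, k even} (-1)^{k/2}/k = -q_p/2` and
`∑_{0<k<p, k odd} (-1)^{(k+1)/2}/k = -(-1)^{(p-1)/2} q_p/2`. -/
theorem stmt9 (p : ℕ) [Fact p.Prime] (hp2 : p ≠ 2) :
    (∑ k ∈ (Finset.Ioo 0 p).filter (fun k => k % 2 = 0),
        (-1 : ZMod p) ^ (k / 2) * ((k : ZMod p))⁻¹ = - qp p / 2) ∧
    (∑ k ∈ (Finset.Ioo 0 p).filter (fun k => k % 2 = 1),
        (-1 : ZMod p) ^ ((k + 1) / 2) * ((k : ZMod p))⁻¹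
          = - (-1 : ZMod p) ^ ((p - 1) / 2) * qp p / 2) := by
  have hp : p.Prime := Fact.out
  have h2 : (2 : ZMod p) ≠ 0 := by
    rw [Ne, ← Nat.cast_ofNat, ZMod.natCast_eq_zero_iff]
    exact fun h => hp2 ((Nat.prime_dvd_prime_iff_eq hp Nat.prime_two).mp h)
  obtain ⟨m, rfl⟩ := hp.odd_of_ne_two hp2
  constructor
  · rw [GaussianInt.qp_eq_two_mul_re_binomialQuotient hp,
      GaussianInt.cast_re_binomialQuotient_sqrtd]
    field_simp
  · rw [GaussianInt.qp_eq_two_mul_im_binomialQuotient hp,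
      GaussianInt.cast_im_binomialQuotient_sqrtd,
      Nat.add_sub_cancel, Nat.mul_div_cancel_left m two_pos]
    field_simp
    rw [← pow_mul, pow_mul', neg_one_sq, one_pow, mul_one]
end

section
/- Let p ≥ 5 be a prime. Then in ℤ/pℤ: Σ_{0 < k < p, k odd} (−1)^{(k+1)/2} / k^2 = ((−1)^{(p+1)/2} / 4) · Σ_{n=1}^{(p−1)/2} (−1)^n · n^{p−3}. (In the paper's notation this computes T_p(2̄), which equals minus the finite Catalan constant −E_{p−3}/2.) -/
open Finset

/-- For a prime `p ≥ 5`, in `ℤ/pℤ`: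
`∑_{0<k<p, k odd} (-1)^{(k+1)/2}/k² = ((-1)^{(p+1)/2}/4) ∑_{n=1}^{(p-1)/2} (-1)^n n^{p-3}`. -/
theorem stmt13 (p : ℕ) [Fact p.Prime] (hp : 5 ≤ p) :
    ∑ k ∈ (Finset.Ioo 0 p).filter (fun k => k % 2 = 1),
        (-1 : ZMod p) ^ ((k + 1) / 2) * (((k : ZMod p)) ^ 2)⁻¹
      = ((-1 : ZMod p) ^ ((p + 1) / 2) / 4) *
          ∑ n ∈ Finset.Icc 1 ((p - 1) / 2), (-1 : ZMod p) ^ n * (n : ZMod p) ^ (p - 3) := by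
  have hprime := (Fact.out : p.Prime)
  have hodd : p % 2 = 1 := Nat.odd_iff.mp (hprime.odd_of_ne_two (by omega))
  set m := (p - 1) / 2 with hm
  have hpm : p = 2 * m + 1 := by omega
  have key : ∀ n ∈ Finset.Icc 1 m, ((n : ZMod p)) ≠ 0 := by
    intro n hn
    simp only [Finset.mem_Icc] at hn
    rw [Ne, ZMod.natCast_eq_zero_iff]
    intro h
    have := Nat.le_of_dvd (by omega) h
    omega
  have step : ∑ n ∈ Finset.Icc 1 m,
      ((-1 : ZMod p) ^ (m + 1) * (-1) ^ n * (((n : ZMod p)) ^ 2)⁻¹ * 4⁻¹)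
      = ∑ k ∈ (Finset.Ioo 0 p).filter (fun k => k % 2 = 1),
        (-1 : ZMod p) ^ ((k + 1) / 2) * (((k : ZMod p)) ^ 2)⁻¹ := by
    refine Finset.sum_nbij' (fun n => p - 2 * n) (fun k => (p - k) / 2) ?_ ?_ ?_ ?_ ?_
    · intro n hn
      simp only [Finset.mem_Icc] at hn
      simp only [Finset.mem_filter, Finset.mem_Ioo]
      omega
    · intro k hk
      simp only [Finset.mem_filter, Finset.mem_Ioo] at hk
      simp only [Finset.mem_Icc]
      omega
    · intro n hn
      simp only [Finset.mem_Icc] at hn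
      show (p - (p - 2 * n)) / 2 = n
      omega
    · intro k hk
      simp only [Finset.mem_filter, Finset.mem_Ioo] at hk
      show p - 2 * ((p - k) / 2) = k
      omega
    · intro n hn
      simp only [Finset.mem_Icc] at hn
      have h2n : 2 * n ≤ p := by omega
      have hcast : ((p - 2 * n : ℕ) : ZMod p) = -(2 * (n : ZMod p)) := by
        push_cast [Nat.cast_sub h2n]
        simp [ZMod.natCast_self]
      have hexp : (p - 2 * n + 1) / 2 = m + 1 - n := by omega
      rw [hcast, hexp]
      have hsign : (-1 : ZMod p) ^ (m + 1 - n) = (-1) ^ (m + 1) * (-1) ^ n := by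
        have h1 : ((-1 : ZMod p) ^ (m + 1 - n)) * (-1) ^ n = (-1) ^ (m + 1) := by
          rw [← pow_add]
          congr 1
          omega
        calc (-1 : ZMod p) ^ (m + 1 - n)
            = (-1) ^ (m + 1 - n) * ((-1) ^ n * (-1) ^ n) := by
              rw [← mul_pow]; simp
          _ = (-1) ^ (m + 1) * (-1) ^ n := by rw [← mul_assoc, h1]
      rw [hsign]
      have hn0 : ((n : ZMod p)) ≠ 0 := key n (by simp [Finset.mem_Icc]; omega)
      have hsq : (-(2 * (n : ZMod p))) ^ 2 = 4 * (n : ZMod p) ^ 2 := by ring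
      rw [hsq, mul_inv]
      ring
  rw [← step]
  have hmp : (p + 1) / 2 = m + 1 := by omega
  rw [hmp, Finset.mul_sum]
  refine Finset.sum_congr rfl ?_
  intro n hn
  have hn0 : ((n : ZMod p)) ≠ 0 := key n hn
  have h1 : (n : ZMod p) ^ (p - 1) = 1 := ZMod.pow_card_sub_one_eq_one hn0
  have hpow : (n : ZMod p) ^ (p - 3) = ((n : ZMod p) ^ 2)⁻¹ := by
    have h2 : (n : ZMod p) ^ (p - 3) * (n : ZMod p) ^ 2 = 1 := by
      rw [← pow_add, show p - 3 + 2 = p - 1 by omega]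
      exact h1
    exact eq_inv_of_mul_eq_one_left h2
  rw [hpow]
  field_simp
end

section
/- Let p ≥ 5 be a prime and let q_p be the Fermat quotient of 2. Then in ℤ/pℤ: S_p(2) = 0, T_p(2) = 0, T_p(1,1) = 0, S_p(1,1) = −q_p^2, and t_p(1,1) = ζ^{(2)}_p(1,1) = q_p^2 / 2. -/
open Finset

/-- `S_p(2) := ∑_{0<k<p, k even} 1/k²` in `ℤ/pℤ`. -/
def Sp_2 (p : ℕ) : ZMod p :=
  ∑ k ∈ (Finset.Ioo 0 p).filter (fun k => k % 2 = 0), (((k : ZMod p)) ^ 2)⁻¹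

/-- `T_p(2) := ∑_{0<k<p, k odd} 1/k²` in `ℤ/pℤ`. -/
def Tp_2 (p : ℕ) : ZMod p :=
  ∑ k ∈ (Finset.Ioo 0 p).filter (fun k => k % 2 = 1), (((k : ZMod p)) ^ 2)⁻¹

/-- `T_p(1,1)`: sum over `p > m > n > 0`, `m` even, `n` odd, of `1/(mn)`. -/
def Tp11 (p : ℕ) : ZMod p :=
  ∑ m ∈ (Finset.Ioo 0 p).filter (fun m => m % 2 = 0),
    ∑ n ∈ (Finset.Ioo 0 m).filter (fun n => n % 2 = 1),
      ((m : ZMod p) * (n : ZMod p))⁻¹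

/-- `S_p(1,1)`: sum over `p > m > n > 0`, `m` odd, `n` even, of `1/(mn)`. -/
def Sp11 (p : ℕ) : ZMod p :=
  ∑ m ∈ (Finset.Ioo 0 p).filter (fun m => m % 2 = 1),
    ∑ n ∈ (Finset.Ioo 0 m).filter (fun n => n % 2 = 0),
      ((m : ZMod p) * (n : ZMod p))⁻¹

/-- `t_p(1,1)`: sum over `p > m > n > 0`, `m, n` both odd, of `1/(mn)`. -/
def tp11 (p : ℕ) : ZMod p :=
  ∑ m ∈ (Finset.Ioo 0 p).filter (fun m => m % 2 = 1),
    ∑ n ∈ (Finset.Ioo 0 m).filter (fun n => n % 2 = 1),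
      ((m : ZMod p) * (n : ZMod p))⁻¹

/-- `ζ^{(2)}_p(1,1)`: sum over `p > m > n > 0`, `m, n` both even, of `1/(mn)`. -/
def zeta2p11 (p : ℕ) : ZMod p :=
  ∑ m ∈ (Finset.Ioo 0 p).filter (fun m => m % 2 = 0),
    ∑ n ∈ (Finset.Ioo 0 m).filter (fun n => n % 2 = 0),
      ((m : ZMod p) * (n : ZMod p))⁻¹


section Aux
variable {p : ℕ} [Fact p.Prime]

private lemma pp : p.Prime := Fact.out

lemma castk_ne {k : ℕ} (h0 : 0 < k) (h1 : k < p) : (k : ZMod p) ≠ 0 := by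
  rw [Ne, ZMod.natCast_eq_zero_iff]
  exact fun h => absurd (Nat.le_of_dvd h0 h) (by omega)

lemma cast_psub {k : ℕ} (h : k ≤ p) : ((p - k : ℕ) : ZMod p) = -(k : ZMod p) := by
  rw [Nat.cast_sub h, ZMod.natCast_self, zero_sub]

lemma two_ne (hp : 5 ≤ p) : (2 : ZMod p) ≠ 0 := by
  have : ((2:ℕ) : ZMod p) ≠ 0 := castk_ne (by norm_num) (by omega)
  simpa using this

lemma three_ne (hp : 5 ≤ p) : (3 : ZMod p) ≠ 0 := by
  have : ((3:ℕ) : ZMod p) ≠ 0 := castk_ne (by norm_num) (by omega)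
  simpa using this

lemma sum_univ_sq (hp : 5 ≤ p) : ∑ x : ZMod p, x ^ 2 = 0 := by
  have h2 : (2 : ZMod p) ≠ 0 := two_ne hp
  have key : ∑ x : ZMod p, (2 * x) ^ 2 = ∑ x : ZMod p, x ^ 2 :=
    Fintype.sum_bijective (fun x => 2 * x) (mulLeft_bijective₀ 2 h2) _ _ (fun x => rfl)
  have h4 : ∑ x : ZMod p, (2 * x) ^ 2 = 4 * ∑ x : ZMod p, x ^ 2 := by
    rw [Finset.mul_sum]; exact Finset.sum_congr rfl fun x _ => by ring
  have h3 : (3 : ZMod p) * ∑ x : ZMod p, x ^ 2 = 0 := by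
    rw [h4] at key; linear_combination key
  exact (mul_eq_zero.mp h3).resolve_left (three_ne hp)

lemma sum_univ_id (hp : 5 ≤ p) : ∑ x : ZMod p, x = 0 := by
  have key : ∑ x : ZMod p, (-x) = ∑ x : ZMod p, x :=
    Fintype.sum_bijective (fun x => -x) neg_involutive.bijective _ _ (fun x => rfl)
  rw [Finset.sum_neg_distrib] at key
  have h2 : (2 : ZMod p) * ∑ x : ZMod p, x = 0 := by linear_combination - key
  exact (mul_eq_zero.mp h2).resolve_left (two_ne hp)

lemma sum_Ioo_f (f : ZMod p → ZMod p) :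
    ∑ k ∈ Ioo 0 p, f (k : ZMod p) = ∑ x ∈ (univ : Finset (ZMod p)).erase 0, f x := by
  haveI : NeZero p := ⟨pp.ne_zero⟩
  refine Finset.sum_nbij' (fun k => (k : ZMod p)) (fun x => x.val) ?_ ?_ ?_ ?_ ?_
  · intro k hk; rw [mem_Ioo] at hk
    exact mem_erase.mpr ⟨castk_ne hk.1 hk.2, mem_univ _⟩
  · intro x hx; rw [mem_erase] at hx; rw [mem_Ioo]
    exact ⟨ZMod.val_pos.mpr hx.1, ZMod.val_lt x⟩
  · intro k hk; rw [mem_Ioo] at hk; exact ZMod.val_cast_of_lt hk.2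
  · intro x _; exact ZMod.natCast_zmod_val x
  · intro k _; rfl

lemma sum_erase_f (f : ZMod p → ZMod p) :
    ∑ x ∈ (univ : Finset (ZMod p)).erase 0, f x = (∑ x : ZMod p, f x) - f 0 := by
  rw [← Finset.add_sum_erase (univ : Finset (ZMod p)) f (mem_univ 0)]
  ring

lemma H_zero (hp : 5 ≤ p) : ∑ k ∈ Ioo 0 p, ((k : ZMod p))⁻¹ = 0 := by
  rw [sum_Ioo_f (fun x => x⁻¹)]
  have : ∑ x ∈ (univ : Finset (ZMod p)).erase 0, x⁻¹
      = ∑ x ∈ (univ : Finset (ZMod p)).erase 0, x := by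
    refine Finset.sum_nbij' (fun x => x⁻¹) (fun x => x⁻¹) ?_ ?_ ?_ ?_ ?_ <;>
      intro x hx <;> simp only [mem_erase, mem_univ, and_true] at hx ⊢
    · exact inv_ne_zero hx
    · exact inv_ne_zero hx
    · exact inv_inv x
    · exact inv_inv x
  rw [this, sum_erase_f, sum_univ_id hp]; ring

lemma P2_zero (hp : 5 ≤ p) : ∑ k ∈ Ioo 0 p, (((k : ZMod p)) ^ 2)⁻¹ = 0 := by
  rw [sum_Ioo_f (fun x => (x ^ 2)⁻¹)]
  have : ∑ x ∈ (univ : Finset (ZMod p)).erase 0, (x ^ 2)⁻¹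
      = ∑ x ∈ (univ : Finset (ZMod p)).erase 0, x ^ 2 := by
    refine Finset.sum_nbij' (fun x => x⁻¹) (fun x => x⁻¹) ?_ ?_ ?_ ?_ ?_ <;>
      intro x hx <;> simp only [mem_erase, mem_univ, and_true] at hx ⊢
    · exact inv_ne_zero hx
    · exact inv_ne_zero hx
    · exact inv_inv x
    · exact inv_inv x
    · rw [inv_pow]
  rw [this, sum_erase_f, sum_univ_sq hp]
  norm_num

end Aux
section Aux2
variable {p : ℕ} [Fact p.Prime]

lemma choose_p_sub_one {k : ℕ} (hk : k ≤ p - 1) :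
    ((Nat.choose (p-1) k : ℕ) : ZMod p) = (-1 : ZMod p) ^ k := by
  have hp1 : 1 ≤ p := pp.pos
  induction k with
  | zero => simp
  | succ n ih =>
    have hn : n ≤ p - 1 := by omega
    have h1 : (p-1).choose n + (p-1).choose (n+1) = p.choose (n+1) := by
      have h := Nat.choose_succ_succ (p-1) n
      simp only [Nat.succ_eq_add_one] at h
      rw [show p - 1 + 1 = p by omega] at h
      omega
    have hdvd : ((p.choose (n+1) : ℕ) : ZMod p) = 0 :=
      (ZMod.natCast_eq_zero_iff _ _).mpr
        (pp.dvd_choose_self (by omega) (by omega))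
    have hc := congrArg (Nat.cast : ℕ → ZMod p) h1
    push_cast at hc
    rw [ih hn] at hc
    rw [hdvd] at hc
    rw [pow_succ]
    linear_combination hc

lemma cast_choose_div {k : ℕ} (h0 : 0 < k) (h1 : k < p) :
    ((p.choose k / p : ℕ) : ZMod p) = (-1 : ZMod p) ^ (k-1) * ((k : ZMod p))⁻¹ := by
  have hpp : p.Prime := Fact.out
  obtain ⟨c, hc⟩ := hpp.dvd_choose_self (by omega : k ≠ 0) h1
  have hdiv : p.choose k / p = c := by rw [hc]; exact Nat.mul_div_cancel_left c hpp.pos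
  have hkey : p * (p-1).choose (k-1) = p.choose k * k := by
    have h := Nat.add_one_mul_choose_eq (p-1) (k-1)
    rw [show p - 1 + 1 = p by have := hpp.pos; omega,
        show k - 1 + 1 = k by omega] at h
    exact h
  have hck : (p-1).choose (k-1) = c * k := by
    rw [hc] at hkey
    exact Nat.eq_of_mul_eq_mul_left hpp.pos (by linarith [hkey] : p * ((p-1).choose (k-1)) = p * (c * k))
  have hcast := congrArg (Nat.cast : ℕ → ZMod p) hck
  push_cast at hcast
  rw [choose_p_sub_one (by omega : k - 1 ≤ p - 1)] at hcast
  rw [hdiv]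
  have hkne : (k : ZMod p) ≠ 0 := castk_ne h0 h1
  rw [eq_mul_inv_iff_mul_eq₀ hkne]
  exact hcast.symm

lemma sum_cast_choose (hp : 5 ≤ p) :
    ∑ k ∈ Ioo 0 p, ((p.choose k / p : ℕ) : ZMod p) = 2 * qp p := by
  have hpp : p.Prime := Fact.out
  have hp0 := hpp.pos
  -- Fermat: p ∣ 2^(p-1) - 1
  have hferm : p ∣ 2^(p-1) - 1 := by
    have h2 : (2 : ZMod p) ≠ 0 := two_ne hp
    have hone := ZMod.pow_card_sub_one_eq_one h2
    have hcast : ((2^(p-1) - 1 : ℕ) : ZMod p) = 0 := by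
      rw [Nat.cast_sub (Nat.one_le_two_pow)]
      push_cast
      rw [hone]; ring
    exact (ZMod.natCast_eq_zero_iff _ _).mp hcast
  set m := (2^(p-1) - 1) / p with hm
  have hpm : p * m = 2^(p-1) - 1 := Nat.mul_div_cancel' hferm
  -- sum of choose over Ioo
  have hrange : Finset.range p = insert 0 (Ioo 0 p) := by
    ext k; simp [Finset.mem_range, Finset.mem_insert, Finset.mem_Ioo]; omega
  have hsumC : ∑ k ∈ Ioo 0 p, p.choose k = 2^p - 2 := by
    have h := Nat.sum_range_choose p
    rw [Finset.sum_range_succ, hrange, Finset.sum_insert (by simp)] at h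
    simp only [Nat.choose_zero_right, Nat.choose_self] at h
    have h2p : 2 ≤ 2^p := by
      calc 2 = 2^1 := rfl
      _ ≤ 2^p := Nat.pow_le_pow_right (by norm_num) (by omega)
    omega
  have hsum2 : ∑ k ∈ Ioo 0 p, p.choose k / p = 2 * m := by
    have hmul : p * (∑ k ∈ Ioo 0 p, p.choose k / p) = p * (2 * m) := by
      rw [Finset.mul_sum]
      have : ∑ k ∈ Ioo 0 p, p * (p.choose k / p) = ∑ k ∈ Ioo 0 p, p.choose k := by
        refine Finset.sum_congr rfl fun k hk => ?_
        rw [mem_Ioo] at hk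
        exact Nat.mul_div_cancel' (hpp.dvd_choose_self (by omega) hk.2)
      rw [this, hsumC]
      have hpow : 2^p = 2 * 2^(p-1) := by
        rw [← pow_succ']
        congr 1; omega
      rw [show p * (2 * m) = 2 * (p * m) by ring]
      omega
    exact Nat.eq_of_mul_eq_mul_left hp0 hmul
  have := congrArg (Nat.cast : ℕ → ZMod p) hsum2
  push_cast at this
  rw [this, qp]

end Aux2
section Aux3
variable {p : ℕ} [Fact p.Prime]

lemma filter_not_parity (s : Finset ℕ) :
    s.filter (fun k => ¬ k % 2 = 1) = s.filter (fun k => k % 2 = 0) :=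
  Finset.filter_congr fun k _ => by constructor <;> intro h <;> omega

lemma A_val (hp : 5 ≤ p) :
    (∑ k ∈ (Ioo 0 p).filter (fun k => k % 2 = 1), ((k : ZMod p))⁻¹) = qp p ∧
    (∑ k ∈ (Ioo 0 p).filter (fun k => k % 2 = 0), ((k : ZMod p))⁻¹) = - qp p := by
  set A := ∑ k ∈ (Ioo 0 p).filter (fun k => k % 2 = 1), ((k : ZMod p))⁻¹ with hA
  set B := ∑ k ∈ (Ioo 0 p).filter (fun k => k % 2 = 0), ((k : ZMod p))⁻¹ with hB
  have hAB : A + B = 0 := by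
    rw [hA, hB, ← filter_not_parity,
      Finset.sum_filter_add_sum_filter_not (Ioo 0 p) (fun k => k % 2 = 1)
        (fun k => ((k : ZMod p))⁻¹)]
    exact H_zero hp
  have hABq : A - B = 2 * qp p := by
    have h := sum_cast_choose hp
    rw [← Finset.sum_filter_add_sum_filter_not (Ioo 0 p) (fun k => k % 2 = 1)
        (fun k => ((p.choose k / p : ℕ) : ZMod p)), filter_not_parity] at h
    have hodd : ∑ k ∈ (Ioo 0 p).filter (fun k => k % 2 = 1),
        ((p.choose k / p : ℕ) : ZMod p) = A := by
      refine Finset.sum_congr rfl fun k hk => ?_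
      simp only [mem_filter, mem_Ioo] at hk
      rw [cast_choose_div hk.1.1 hk.1.2,
        Even.neg_one_pow (Nat.even_iff.mpr (by omega)), one_mul]
    have heven : ∑ k ∈ (Ioo 0 p).filter (fun k => k % 2 = 0),
        ((p.choose k / p : ℕ) : ZMod p) = - B := by
      rw [hB, ← Finset.sum_neg_distrib]
      refine Finset.sum_congr rfl fun k hk => ?_
      simp only [mem_filter, mem_Ioo] at hk
      rw [cast_choose_div hk.1.1 hk.1.2,
        Odd.neg_one_pow (Nat.odd_iff.mpr (by omega))]
      ring
    rw [hodd, heven] at h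
    linear_combination h
  have h2 : (2 : ZMod p) ≠ 0 := two_ne hp
  have hAq : A = qp p := by
    have : (2 : ZMod p) * A = 2 * qp p := by linear_combination hAB + hABq
    exact mul_left_cancel₀ h2 this
  have hBq : B = - qp p := by linear_combination hAB - hAq
  exact ⟨hAq, hBq⟩

lemma podd (hp : 5 ≤ p) : p % 2 = 1 := by
  have hpp : p.Prime := Fact.out
  exact Nat.odd_iff.mp (hpp.odd_of_ne_two (by omega))

lemma S2T2 (hp : 5 ≤ p) : Sp_2 p = 0 ∧ Tp_2 p = 0 := by
  have hp2 : p % 2 = 1 := podd hp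
  have heq : Sp_2 p = Tp_2 p := by
    rw [Sp_2, Tp_2]
    refine Finset.sum_nbij' (fun k => p - k) (fun k => p - k) ?_ ?_ ?_ ?_ ?_ <;>
      intro k hk <;> simp only [mem_filter, mem_Ioo] at hk ⊢
    · omega
    · omega
    · omega
    · omega
    · rw [cast_psub (by omega : k ≤ p), neg_sq]
  have hsum : Sp_2 p + Tp_2 p = 0 := by
    rw [Sp_2, Tp_2, add_comm, ← filter_not_parity,
      Finset.sum_filter_add_sum_filter_not (Ioo 0 p) (fun k => k % 2 = 1)
        (fun k => (((k : ZMod p)) ^ 2)⁻¹)]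
    exact P2_zero hp
  have h2 : (2 : ZMod p) ≠ 0 := two_ne hp
  have hS : Sp_2 p = 0 := by
    have : (2 : ZMod p) * Sp_2 p = 0 := by linear_combination hsum + heq
    exact (mul_eq_zero.mp this).resolve_left h2
  exact ⟨hS, heq ▸ hS⟩

end Aux3
section Aux4
variable {p : ℕ} [Fact p.Prime]

lemma nested_eq (pm pn : ℕ → Prop) [DecidablePred pm] [DecidablePred pn]
    (f : ℕ → ℕ → ZMod p) :
    (∑ m ∈ (Ioo 0 p).filter pm, ∑ n ∈ (Ioo 0 m).filter pn, f m n)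
    = ∑ x ∈ (Ioo 0 p ×ˢ Ioo 0 p).filter
        (fun x => pm x.1 ∧ pn x.2 ∧ x.2 < x.1), f x.1 x.2 := by
  have hR : (∑ x ∈ (Ioo 0 p ×ˢ Ioo 0 p).filter
        (fun x => pm x.1 ∧ pn x.2 ∧ x.2 < x.1), f x.1 x.2)
      = ∑ m ∈ Ioo 0 p, ∑ n ∈ Ioo 0 p,
          if pm m ∧ pn n ∧ n < m then f m n else 0 := by
    rw [Finset.sum_filter]
    exact Finset.sum_product' _ _ (fun m n => if pm m ∧ pn n ∧ n < m then f m n else 0)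
  rw [hR, Finset.sum_filter]
  refine Finset.sum_congr rfl fun m hm => ?_
  rw [mem_Ioo] at hm
  by_cases hpm : pm m
  · rw [if_pos hpm]
    have hsub : (Ioo 0 m).filter pn = (Ioo 0 p).filter (fun n => pn n ∧ n < m) := by
      ext n
      simp only [mem_filter, mem_Ioo]
      constructor
      · rintro ⟨⟨h1, h2⟩, h3⟩; exact ⟨⟨h1, h2.trans hm.2⟩, h3, h2⟩
      · rintro ⟨⟨h1, _⟩, h3, h4⟩; exact ⟨⟨h1, h4⟩, h3⟩
    rw [hsub, Finset.sum_filter]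
    refine Finset.sum_congr rfl fun n _ => ?_
    by_cases h1 : pn n <;> by_cases h2 : n < m <;> simp [h1, h2, hpm]
  · rw [if_neg hpm]
    refine (Finset.sum_eq_zero fun n _ => ?_).symm
    simp [hpm]

end Aux4


/-- For a prime `p ≥ 5`, in `ℤ/pℤ`: `S_p(2) = T_p(2) = T_p(1,1) = 0`,
`S_p(1,1) = -q_p²`, and `t_p(1,1) = ζ^{(2)}_p(1,1) = q_p²/2`. -/
theorem stmt14 (p : ℕ) [Fact p.Prime] (hp : 5 ≤ p) :
    Sp_2 p = 0 ∧ Tp_2 p = 0 ∧ Tp11 p = 0 ∧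
    Sp11 p = - qp p ^ 2 ∧
    tp11 p = zeta2p11 p ∧ tp11 p = qp p ^ 2 / 2 := by
  have hp2 : p % 2 = 1 := podd hp
  have h2 : (2 : ZMod p) ≠ 0 := two_ne hp
  obtain ⟨hS2, hT2⟩ := S2T2 hp
  obtain ⟨hAq, hBq⟩ := A_val hp
  set q : ZMod p := qp p with hq
  set v : ℕ × ℕ → ZMod p := fun x => ((x.1 : ZMod p) * (x.2 : ZMod p))⁻¹ with hv
  set w : ℕ × ℕ → ZMod p :=
    fun x => ((x.2 : ZMod p) * ((x.1 - x.2 : ℕ) : ZMod p))⁻¹ with hw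
  set Q : Finset (ℕ × ℕ) := Ioo 0 p ×ˢ Ioo 0 p with hQ
  set Tt := Q.filter (fun x => x.1 % 2 = 0 ∧ x.2 % 2 = 1 ∧ x.2 < x.1) with hTt
  set Ss := Q.filter (fun x => x.1 % 2 = 1 ∧ x.2 % 2 = 0 ∧ x.2 < x.1) with hSs
  set tt := Q.filter (fun x => x.1 % 2 = 1 ∧ x.2 % 2 = 1 ∧ x.2 < x.1) with htt
  set zz := Q.filter (fun x => x.1 % 2 = 0 ∧ x.2 % 2 = 0 ∧ x.2 < x.1) with hzz
  -- expressing the nested sums as pair sums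
  have hTpair : Tp11 p = ∑ x ∈ Tt, v x := by unfold Tp11; exact nested_eq _ _ _
  have hSpair : Sp11 p = ∑ x ∈ Ss, v x := by unfold Sp11; exact nested_eq _ _ _
  have htpair : tp11 p = ∑ x ∈ tt, v x := by unfold tp11; exact nested_eq _ _ _
  have hzpair : zeta2p11 p = ∑ x ∈ zz, v x := by unfold zeta2p11; exact nested_eq _ _ _
  -- A² as a pair sum over all odd pairs
  have hYodd : (q : ZMod p) * q
      = ∑ x ∈ Q.filter (fun x => x.1 % 2 = 1 ∧ x.2 % 2 = 1), v x := by
    rw [← hAq, Finset.sum_mul_sum]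
    rw [← Finset.sum_product' _ _
      (fun (m n : ℕ) => ((m : ZMod p))⁻¹ * ((n : ZMod p))⁻¹), ← Finset.filter_product]
    refine Finset.sum_congr rfl fun x _ => ?_
    simp only [hv]
    exact (mul_inv _ _).symm
  have hYoe : -(q * q)
      = ∑ x ∈ Q.filter (fun x => x.1 % 2 = 1 ∧ x.2 % 2 = 0), v x := by
    rw [show -(q*q) = (∑ k ∈ (Ioo 0 p).filter (fun k => k % 2 = 1), ((k : ZMod p))⁻¹) *
        (∑ k ∈ (Ioo 0 p).filter (fun k => k % 2 = 0), ((k : ZMod p))⁻¹) by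
      rw [hAq, hBq]; ring]
    rw [Finset.sum_mul_sum]
    rw [← Finset.sum_product' _ _
      (fun (m n : ℕ) => ((m : ZMod p))⁻¹ * ((n : ZMod p))⁻¹), ← Finset.filter_product]
    refine Finset.sum_congr rfl fun x _ => ?_
    simp only [hv]
    exact (mul_inv _ _).symm
  -- swapping lemma
  have hswap : ∀ (a b : ℕ → Prop) (_ : DecidablePred a) (_ : DecidablePred b),
      ∑ x ∈ Q.filter (fun x => a x.1 ∧ b x.2 ∧ x.1 < x.2), v x
      = ∑ x ∈ Q.filter (fun x => b x.1 ∧ a x.2 ∧ x.2 < x.1), v x := by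
    intro a b _ _
    refine Finset.sum_nbij' Prod.swap Prod.swap ?_ ?_ ?_ ?_ ?_
    · rintro ⟨m, n⟩ hx
      simp only [hQ, mem_filter, mem_product, mem_Ioo, Prod.swap_prod_mk] at hx ⊢
      tauto
    · rintro ⟨m, n⟩ hx
      simp only [hQ, mem_filter, mem_product, mem_Ioo, Prod.swap_prod_mk] at hx ⊢
      tauto
    · rintro ⟨m, n⟩ _; rfl
    · rintro ⟨m, n⟩ _; rfl
    · rintro ⟨m, n⟩ _
      simp only [hv, Prod.swap_prod_mk]
      rw [mul_comm]
  -- splitting the all-odd-pairs sum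
  have hYsplit : ∑ x ∈ Q.filter (fun x => x.1 % 2 = 1 ∧ x.2 % 2 = 1), v x
      = 2 * ∑ x ∈ tt, v x + Tp_2 p := by
    rw [← Finset.sum_filter_add_sum_filter_not
      (Q.filter (fun x => x.1 % 2 = 1 ∧ x.2 % 2 = 1)) (fun x => x.2 < x.1) v]
    have e1 : (Q.filter (fun x => x.1 % 2 = 1 ∧ x.2 % 2 = 1)).filter
        (fun x : ℕ × ℕ => x.2 < x.1) = tt := by
      rw [Finset.filter_filter, htt]
      exact Finset.filter_congr fun x _ => by tauto
    have e2 : (Q.filter (fun x => x.1 % 2 = 1 ∧ x.2 % 2 = 1)).filter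
        (fun x : ℕ × ℕ => ¬ x.2 < x.1)
        = Q.filter (fun x => x.1 % 2 = 1 ∧ x.2 % 2 = 1 ∧ x.1 < x.2) ∪
          Q.filter (fun x => x.1 % 2 = 1 ∧ x.2 % 2 = 1 ∧ x.1 = x.2) := by
      rw [Finset.filter_filter, ← Finset.filter_or]
      exact Finset.filter_congr fun x _ => by constructor <;> intro h <;> omega
    rw [e1, e2, Finset.sum_union]
    · have e3 : ∑ x ∈ Q.filter (fun x => x.1 % 2 = 1 ∧ x.2 % 2 = 1 ∧ x.1 < x.2), v x
          = ∑ x ∈ tt, v x := by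
        rw [htt]
        exact hswap (fun m => m % 2 = 1) (fun m => m % 2 = 1) inferInstance inferInstance
      have e4 : ∑ x ∈ Q.filter (fun x => x.1 % 2 = 1 ∧ x.2 % 2 = 1 ∧ x.1 = x.2), v x
          = Tp_2 p := by
        rw [Tp_2]
        refine Finset.sum_nbij' (fun x => x.1) (fun n => (n, n)) ?_ ?_ ?_ ?_ ?_
        · rintro ⟨m, n⟩ hx
          simp only [hQ, mem_filter, mem_product, mem_Ioo] at hx ⊢
          omega
        · rintro n hx
          simp only [hQ, mem_filter, mem_product, mem_Ioo] at hx ⊢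
          exact ⟨⟨hx.1, hx.1⟩, hx.2, hx.2, trivial⟩
        · rintro ⟨m, n⟩ hx
          simp only [hQ, mem_filter, mem_product, mem_Ioo] at hx
          simp only [Prod.mk.injEq, and_true, true_and]
          omega
        · rintro n _; rfl
        · rintro ⟨m, n⟩ hx
          simp only [hQ, mem_filter, mem_product, mem_Ioo] at hx
          simp only [hv]
          have : n = m := by omega
          rw [this, sq]
      rw [e3, e4]; ring
    · rw [Finset.disjoint_left]
      intro x h1 h3
      simp only [mem_filter] at h1 h3
      omega
  have htval : 2 * ∑ x ∈ tt, v x = q ^ 2 := by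
    rw [hYsplit, hT2] at hYodd
    linear_combination - hYodd
  -- ζ-sum equals t-sum
  have hzt : ∑ x ∈ zz, v x = ∑ x ∈ tt, v x := by
    refine Finset.sum_nbij' (fun x : ℕ × ℕ => (p - x.2, p - x.1))
      (fun x : ℕ × ℕ => (p - x.2, p - x.1)) ?_ ?_ ?_ ?_ ?_
    · rintro ⟨a, b⟩ hx
      simp only [hzz, htt, hQ, mem_filter, mem_product, mem_Ioo] at hx ⊢
      omega
    · rintro ⟨a, b⟩ hx
      simp only [hzz, htt, hQ, mem_filter, mem_product, mem_Ioo] at hx ⊢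
      omega
    · rintro ⟨a, b⟩ hx
      simp only [hzz, hQ, mem_filter, mem_product, mem_Ioo] at hx
      simp only [Prod.mk.injEq, and_true, true_and]
      omega
    · rintro ⟨a, b⟩ hx
      simp only [htt, hQ, mem_filter, mem_product, mem_Ioo] at hx
      simp only [Prod.mk.injEq, and_true, true_and]
      omega
    · rintro ⟨a, b⟩ hx
      simp only [hzz, hQ, mem_filter, mem_product, mem_Ioo] at hx
      simp only [hv]
      congr 1
      rw [cast_psub (by omega), cast_psub (by omega)]
      ring
  -- splitting the odd-even pairs sum
  have hOEsplit : ∑ x ∈ Q.filter (fun x => x.1 % 2 = 1 ∧ x.2 % 2 = 0), v x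
      = ∑ x ∈ Ss, v x + ∑ x ∈ Tt, v x := by
    rw [← Finset.sum_filter_add_sum_filter_not
      (Q.filter (fun x => x.1 % 2 = 1 ∧ x.2 % 2 = 0)) (fun x => x.2 < x.1) v]
    have e1 : (Q.filter (fun x => x.1 % 2 = 1 ∧ x.2 % 2 = 0)).filter
        (fun x : ℕ × ℕ => x.2 < x.1) = Ss := by
      rw [Finset.filter_filter, hSs]
      exact Finset.filter_congr fun x _ => by tauto
    have e2 : (Q.filter (fun x => x.1 % 2 = 1 ∧ x.2 % 2 = 0)).filter
        (fun x : ℕ × ℕ => ¬ x.2 < x.1)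
        = Q.filter (fun x => x.1 % 2 = 1 ∧ x.2 % 2 = 0 ∧ x.1 < x.2) := by
      rw [Finset.filter_filter]
      exact Finset.filter_congr fun x _ => by constructor <;> intro h <;> omega
    rw [e1, e2,
      hswap (fun m => m % 2 = 1) (fun m => m % 2 = 0) inferInstance inferInstance, ← hTt]
  have hSTval : ∑ x ∈ Ss, v x + ∑ x ∈ Tt, v x = - q ^ 2 := by
    rw [← hOEsplit, ← hYoe]; ring
  -- doubling identity
  have hdouble : ∀ r : ℕ,
      2 * ∑ x ∈ Q.filter (fun x => x.1 % 2 = 0 ∧ x.2 % 2 = r ∧ x.2 < x.1), v x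
      = ∑ x ∈ Q.filter (fun x => x.1 % 2 = r ∧ x.2 % 2 = r ∧ x.1 + x.2 < p), v x := by
    intro r
    have hflip : ∑ x ∈ Q.filter (fun x => x.1 % 2 = 0 ∧ x.2 % 2 = r ∧ x.2 < x.1),
          v (x.1, x.1 - x.2)
        = ∑ x ∈ Q.filter (fun x => x.1 % 2 = 0 ∧ x.2 % 2 = r ∧ x.2 < x.1), v x := by
      refine Finset.sum_nbij' (fun x : ℕ × ℕ => (x.1, x.1 - x.2))
        (fun x : ℕ × ℕ => (x.1, x.1 - x.2)) ?_ ?_ ?_ ?_ ?_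
      · rintro ⟨a, b⟩ hx
        simp only [hQ, mem_filter, mem_product, mem_Ioo] at hx ⊢
        omega
      · rintro ⟨a, b⟩ hx
        simp only [hQ, mem_filter, mem_product, mem_Ioo] at hx ⊢
        omega
      · rintro ⟨a, b⟩ hx
        simp only [hQ, mem_filter, mem_product, mem_Ioo] at hx
        simp only [Prod.mk.injEq, and_true, true_and]
        omega
      · rintro ⟨a, b⟩ hx
        simp only [hQ, mem_filter, mem_product, mem_Ioo] at hx
        simp only [Prod.mk.injEq, and_true, true_and]
        omega
      · rintro ⟨a, b⟩ _; rfl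
    have key : ∀ x ∈ Q.filter (fun x => x.1 % 2 = 0 ∧ x.2 % 2 = r ∧ x.2 < x.1),
        v x + v (x.1, x.1 - x.2) = w x := by
      rintro ⟨a, b⟩ hx
      simp only [hQ, mem_filter, mem_product, mem_Ioo] at hx
      obtain ⟨⟨⟨ha0, hap⟩, hb0, hbp⟩, -, -, hba⟩ := hx
      have hb : (b : ZMod p) ≠ 0 := castk_ne hb0 hbp
      have hc : ((a - b : ℕ) : ZMod p) ≠ 0 := castk_ne (by omega) (by omega)
      have ha : (a : ZMod p) = (b : ZMod p) + ((a - b : ℕ) : ZMod p) := by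
        rw [← Nat.cast_add]; congr 1; omega
      have ha' : (b : ZMod p) + ((a - b : ℕ) : ZMod p) ≠ 0 := by
        rw [← ha]; exact castk_ne ha0 hap
      simp only [hv, hw]
      rw [ha]
      field_simp
      ring
    have hre : ∑ x ∈ Q.filter (fun x => x.1 % 2 = 0 ∧ x.2 % 2 = r ∧ x.2 < x.1), w x
        = ∑ x ∈ Q.filter (fun x => x.1 % 2 = r ∧ x.2 % 2 = r ∧ x.1 + x.2 < p), v x := by
      refine Finset.sum_nbij' (fun x : ℕ × ℕ => (x.2, x.1 - x.2))
        (fun y : ℕ × ℕ => (y.1 + y.2, y.1)) ?_ ?_ ?_ ?_ ?_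
      · rintro ⟨a, b⟩ hx
        simp only [hQ, mem_filter, mem_product, mem_Ioo] at hx ⊢
        omega
      · rintro ⟨c, d⟩ hx
        simp only [hQ, mem_filter, mem_product, mem_Ioo] at hx ⊢
        omega
      · rintro ⟨a, b⟩ hx
        simp only [hQ, mem_filter, mem_product, mem_Ioo] at hx
        simp only [Prod.mk.injEq, and_true, true_and]
        omega
      · rintro ⟨c, d⟩ hx
        simp only [hQ, mem_filter, mem_product, mem_Ioo] at hx
        simp only [Prod.mk.injEq, and_true, true_and]
        omega
      · rintro ⟨a, b⟩ _; rfl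
    calc 2 * ∑ x ∈ Q.filter (fun x => x.1 % 2 = 0 ∧ x.2 % 2 = r ∧ x.2 < x.1), v x
        = (∑ x ∈ Q.filter (fun x => x.1 % 2 = 0 ∧ x.2 % 2 = r ∧ x.2 < x.1), v x)
          + ∑ x ∈ Q.filter (fun x => x.1 % 2 = 0 ∧ x.2 % 2 = r ∧ x.2 < x.1),
              v (x.1, x.1 - x.2) := by rw [hflip]; ring
      _ = ∑ x ∈ Q.filter (fun x => x.1 % 2 = 0 ∧ x.2 % 2 = r ∧ x.2 < x.1),
            (v x + v (x.1, x.1 - x.2)) := by rw [Finset.sum_add_distrib]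
      _ = ∑ x ∈ Q.filter (fun x => x.1 % 2 = 0 ∧ x.2 % 2 = r ∧ x.2 < x.1), w x :=
            Finset.sum_congr rfl key
      _ = _ := hre
  have hdr : 2 * ∑ x ∈ Tt, v x
      = ∑ x ∈ Q.filter (fun x => x.1 % 2 = 1 ∧ x.2 % 2 = 1 ∧ x.1 + x.2 < p), v x := by
    rw [hTt]; exact hdouble 1
  have hdz : 2 * ∑ x ∈ zz, v x
      = ∑ x ∈ Q.filter (fun x => x.1 % 2 = 0 ∧ x.2 % 2 = 0 ∧ x.1 + x.2 < p), v x := by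
    rw [hzz]; exact hdouble 0
  -- even small-sum pairs ↦ odd large-sum pairs
  have hVgt : ∑ x ∈ Q.filter (fun x => x.1 % 2 = 0 ∧ x.2 % 2 = 0 ∧ x.1 + x.2 < p), v x
      = ∑ x ∈ Q.filter (fun x => x.1 % 2 = 1 ∧ x.2 % 2 = 1 ∧ p < x.1 + x.2), v x := by
    refine Finset.sum_nbij' (fun x : ℕ × ℕ => (p - x.1, p - x.2))
      (fun x : ℕ × ℕ => (p - x.1, p - x.2)) ?_ ?_ ?_ ?_ ?_
    · rintro ⟨a, b⟩ hx
      simp only [hQ, mem_filter, mem_product, mem_Ioo] at hx ⊢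
      omega
    · rintro ⟨a, b⟩ hx
      simp only [hQ, mem_filter, mem_product, mem_Ioo] at hx ⊢
      omega
    · rintro ⟨a, b⟩ hx
      simp only [hQ, mem_filter, mem_product, mem_Ioo] at hx
      simp only [Prod.mk.injEq, and_true, true_and]
      omega
    · rintro ⟨a, b⟩ hx
      simp only [hQ, mem_filter, mem_product, mem_Ioo] at hx
      simp only [Prod.mk.injEq, and_true, true_and]
      omega
    · rintro ⟨a, b⟩ hx
      simp only [hQ, mem_filter, mem_product, mem_Ioo] at hx
      simp only [hv]
      congr 1
      rw [cast_psub (by omega), cast_psub (by omega)]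
      ring
  -- partition of the all-odd-pairs sum by a+b < p vs a+b > p
  have hYpart : (∑ x ∈ Q.filter (fun x => x.1 % 2 = 1 ∧ x.2 % 2 = 1 ∧ x.1 + x.2 < p), v x)
      + ∑ x ∈ Q.filter (fun x => x.1 % 2 = 1 ∧ x.2 % 2 = 1 ∧ p < x.1 + x.2), v x
      = ∑ x ∈ Q.filter (fun x => x.1 % 2 = 1 ∧ x.2 % 2 = 1), v x := by
    have e1 : (Q.filter (fun x => x.1 % 2 = 1 ∧ x.2 % 2 = 1)).filter
        (fun x : ℕ × ℕ => x.1 + x.2 < p)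
        = Q.filter (fun x => x.1 % 2 = 1 ∧ x.2 % 2 = 1 ∧ x.1 + x.2 < p) := by
      rw [Finset.filter_filter]
      exact Finset.filter_congr fun x _ => by tauto
    have e2 : (Q.filter (fun x => x.1 % 2 = 1 ∧ x.2 % 2 = 1)).filter
        (fun x : ℕ × ℕ => ¬ x.1 + x.2 < p)
        = Q.filter (fun x => x.1 % 2 = 1 ∧ x.2 % 2 = 1 ∧ p < x.1 + x.2) := by
      rw [Finset.filter_filter]
      refine Finset.filter_congr fun x _ => ?_
      constructor <;> intro h <;> omega
    rw [← Finset.sum_filter_add_sum_filter_not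
      (Q.filter (fun x => x.1 % 2 = 1 ∧ x.2 % 2 = 1)) (fun x => x.1 + x.2 < p) v, e1, e2]
  -- conclude
  have hTTval : ∑ x ∈ Tt, v x = 0 := by
    have h0 : (2 : ZMod p) * ∑ x ∈ Tt, v x = 0 := by
      linear_combination hdr + hYpart - hYodd + hVgt + hdz - 2 * hzt - htval
    exact (mul_eq_zero.mp h0).resolve_left h2
  have hSSval : ∑ x ∈ Ss, v x = - q ^ 2 := by linear_combination hSTval - hTTval
  refine ⟨hS2, hT2, ?_, ?_, ?_, ?_⟩
  · rw [hTpair]; exact hTTval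
  · rw [hSpair]; exact hSSval
  · rw [htpair, hzpair, hzt]
  · rw [htpair, eq_div_iff h2]
    linear_combination htval
end

section
/- Let p ≥ 5 be a prime and let q_p be the Fermat quotient of 2. Then in ℤ/pℤ: T_p(1̄,1̄) = 2 · T_p(1,1̄), S_p(1̄,1̄) = −2 · t_p(1,1̄), and t_p(1̄,1̄) = ζ^{(2)}_p(1̄,1̄) = q_p^2 / 8. -/
/-
Write `W(f, g) = sumInvLt f g = ∑_{p > m > n > 0} f m g n / (m n)` in `ℤ/pℤ`, and let `cosQ n`,
`sinQ n` be the real and imaginary parts of `iⁿ`. Restricting a summation index to even or odd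
values and attaching the signs of the statement amounts to weighting it by `cosQ`, `sinQ`, `(-1)ⁿ`
or `1`, so every sum in the statement is such a `W`. These satisfy three kinds of linear relations:
the stuffle relation `W(f, g) + W(g, f) + ∑ f g / n² = (∑ f / n)(∑ g / n)`; the reflection
`n ↦ p - n`, which exchanges `cosQ` and `± sinQ`; and the shuffle relation, coming from the
partial fractions `1/((m - n) n) = 1/(m n) + 1/((m - n) m)`, which links `W` with the sums over
the triangle `m + n < p`. Solving the resulting linear system expresses everything in terms of
`∑ sinQ n / n²`, which cancels, and `∑ cosQ n / n = -q_p / 2`; along the way `∑ sinQ n ² / n²`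
vanishes because `∑ 1 / n² = 0` for `p ≥ 5`. Finally `∑ cosQ n / n` is a quarter of
`∑ (-1)ⁿ / n = -2 q_p`, which comes from `2^p = ∑ C(p, k)` and `C(p, k) / p ≡ (-1)^(k-1) / k`.
-/

open Finset

/-- `T_p(1̄,1̄)`: sum over `p > m > n > 0`, `m` even, `n` odd, of
`(-1)^{m/2}(-1)^{(n+1)/2}/(mn)` in `ℤ/pℤ`. -/
def Tpbb (p : ℕ) : ZMod p :=
  ∑ m ∈ (Finset.Ioo 0 p).filter (fun m => m % 2 = 0),
    ∑ n ∈ (Finset.Ioo 0 m).filter (fun n => n % 2 = 1),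
      (-1 : ZMod p) ^ (m / 2) * (-1 : ZMod p) ^ ((n + 1) / 2) *
        ((m : ZMod p) * (n : ZMod p))⁻¹

/-- `T_p(1,1̄)`: sum over `p > m > n > 0`, `m` even, `n` odd, of
`(-1)^{(n+1)/2}/(mn)` in `ℤ/pℤ`. -/
def Tp1b (p : ℕ) : ZMod p :=
  ∑ m ∈ (Finset.Ioo 0 p).filter (fun m => m % 2 = 0),
    ∑ n ∈ (Finset.Ioo 0 m).filter (fun n => n % 2 = 1),
      (-1 : ZMod p) ^ ((n + 1) / 2) * ((m : ZMod p) * (n : ZMod p))⁻¹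

/-- `S_p(1̄,1̄)`: sum over `p > m > n > 0`, `m` odd, `n` even, of
`(-1)^{(m+1)/2}(-1)^{n/2}/(mn)` in `ℤ/pℤ`. -/
def Spbb (p : ℕ) : ZMod p :=
  ∑ m ∈ (Finset.Ioo 0 p).filter (fun m => m % 2 = 1),
    ∑ n ∈ (Finset.Ioo 0 m).filter (fun n => n % 2 = 0),
      (-1 : ZMod p) ^ ((m + 1) / 2) * (-1 : ZMod p) ^ (n / 2) *
        ((m : ZMod p) * (n : ZMod p))⁻¹

/-- `t_p(1,1̄)`: sum over `p > m > n > 0`, `m, n` both odd, of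
`(-1)^{(n+1)/2}/(mn)` in `ℤ/pℤ`. -/
def tp1b (p : ℕ) : ZMod p :=
  ∑ m ∈ (Finset.Ioo 0 p).filter (fun m => m % 2 = 1),
    ∑ n ∈ (Finset.Ioo 0 m).filter (fun n => n % 2 = 1),
      (-1 : ZMod p) ^ ((n + 1) / 2) * ((m : ZMod p) * (n : ZMod p))⁻¹

/-- `t_p(1̄,1̄)`: sum over `p > m > n > 0`, `m, n` both odd, of
`(-1)^{(m+1)/2}(-1)^{(n+1)/2}/(mn)` in `ℤ/pℤ`. -/
def tpbb (p : ℕ) : ZMod p :=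
  ∑ m ∈ (Finset.Ioo 0 p).filter (fun m => m % 2 = 1),
    ∑ n ∈ (Finset.Ioo 0 m).filter (fun n => n % 2 = 1),
      (-1 : ZMod p) ^ ((m + 1) / 2) * (-1 : ZMod p) ^ ((n + 1) / 2) *
        ((m : ZMod p) * (n : ZMod p))⁻¹

/-- `ζ^{(2)}_p(1̄,1̄)`: sum over `p > m > n > 0`, `m, n` both even, of
`(-1)^{m/2}(-1)^{n/2}/(mn)` in `ℤ/pℤ`. -/
def zeta2pbb (p : ℕ) : ZMod p :=
  ∑ m ∈ (Finset.Ioo 0 p).filter (fun m => m % 2 = 0),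
    ∑ n ∈ (Finset.Ioo 0 m).filter (fun n => n % 2 = 0),
      (-1 : ZMod p) ^ (m / 2) * (-1 : ZMod p) ^ (n / 2) *
        ((m : ZMod p) * (n : ZMod p))⁻¹

theorem neg_one_pow_sub_of_le {R : Type*} [Monoid R] [HasDistribNeg R] {m n : ℕ} (h : n ≤ m) :
    (-1 : R) ^ (m - n) = (-1) ^ n * (-1) ^ m := by
  obtain ⟨d, rfl⟩ := Nat.exists_eq_add_of_le h
  rw [Nat.add_sub_cancel_left, pow_add, ← mul_assoc, ← pow_add, Even.neg_one_pow ⟨n, rfl⟩,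
    one_mul]

section QuarterTurn

variable {R : Type*} [CommRing R]

-- `iⁿ = cosQ n + i sinQ n`, i.e. `cosQ n = cos (nπ/2)` and `sinQ n = sin (nπ/2)`.
def cosQ (n : ℕ) : R := if n % 4 = 0 then 1 else if n % 4 = 2 then -1 else 0

def sinQ (n : ℕ) : R := if n % 4 = 1 then 1 else if n % 4 = 3 then -1 else 0

theorem neg_one_pow_eq_pow_mod_four (n : ℕ) : (-1 : R) ^ n = (-1) ^ (n % 4) := by
  rw [← Nat.mod_add_div n 4, pow_add, pow_mul]; norm_num

theorem cosQ_add (a b : ℕ) : (cosQ (a + b) : R) = cosQ a * cosQ b - sinQ a * sinQ b := by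
  simp only [cosQ, sinQ, Nat.add_mod a b]
  have := Nat.mod_lt a four_pos; have := Nat.mod_lt b four_pos
  interval_cases a % 4 <;> interval_cases b % 4 <;> norm_num

theorem sinQ_add (a b : ℕ) : (sinQ (a + b) : R) = sinQ a * cosQ b + cosQ a * sinQ b := by
  simp only [cosQ, sinQ, Nat.add_mod a b]
  have := Nat.mod_lt a four_pos; have := Nat.mod_lt b four_pos
  interval_cases a % 4 <;> interval_cases b % 4 <;> norm_num

theorem cosQ_sq_add_sinQ_sq (n : ℕ) : (cosQ n : R) ^ 2 + sinQ n ^ 2 = 1 := by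
  simp only [cosQ, sinQ]
  have := Nat.mod_lt n four_pos
  interval_cases n % 4 <;> norm_num

theorem cosQ_sub {a b : ℕ} (h : b ≤ a) :
    (cosQ (a - b) : R) = cosQ a * cosQ b + sinQ a * sinQ b := by
  obtain ⟨d, rfl⟩ := Nat.exists_eq_add_of_le h
  rw [Nat.add_sub_cancel_left, add_comm b d, cosQ_add, sinQ_add]
  linear_combination -(cosQ d : R) * cosQ_sq_add_sinQ_sq (R := R) b

theorem sinQ_sub {a b : ℕ} (h : b ≤ a) :
    (sinQ (a - b) : R) = sinQ a * cosQ b - cosQ a * sinQ b := by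
  obtain ⟨d, rfl⟩ := Nat.exists_eq_add_of_le h
  rw [Nat.add_sub_cancel_left, add_comm b d, cosQ_add, sinQ_add]
  linear_combination -(sinQ d : R) * cosQ_sq_add_sinQ_sq (R := R) b

theorem cosQ_mul_sinQ (n : ℕ) : (cosQ n : R) * sinQ n = 0 := by
  simp only [cosQ, sinQ]
  have := Nat.mod_lt n four_pos
  interval_cases n % 4 <;> norm_num

theorem two_mul_sinQ_sq (n : ℕ) : 2 * (sinQ n : R) ^ 2 = 1 - (-1) ^ n := by
  rw [neg_one_pow_eq_pow_mod_four]; simp only [sinQ]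
  have := Nat.mod_lt n four_pos
  interval_cases n % 4 <;> norm_num

theorem cosQ_mul_neg_one_pow (n : ℕ) : (cosQ n : R) * (-1) ^ n = cosQ n := by
  rw [neg_one_pow_eq_pow_mod_four]; simp only [cosQ]
  have := Nat.mod_lt n four_pos
  interval_cases n % 4 <;> norm_num

theorem sinQ_mul_neg_one_pow (n : ℕ) : (sinQ n : R) * (-1) ^ n = -sinQ n := by
  rw [neg_one_pow_eq_pow_mod_four]; simp only [sinQ]
  have := Nat.mod_lt n four_pos
  interval_cases n % 4 <;> norm_num

theorem cosQ_two_mul (k : ℕ) : (cosQ (2 * k) : R) = (-1) ^ k := by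
  rw [neg_one_pow_eq_pow_mod_two, cosQ, show 2 * k % 4 = 2 * (k % 2) by omega]
  have := Nat.mod_lt k two_pos
  interval_cases k % 2 <;> norm_num

theorem sinQ_two_mul (k : ℕ) : (sinQ (2 * k) : R) = 0 := by
  rw [sinQ, show 2 * k % 4 = 2 * (k % 2) by omega]
  have := Nat.mod_lt k two_pos
  interval_cases k % 2 <;> norm_num

theorem cosQ_two_mul_add_one (k : ℕ) : (cosQ (2 * k + 1) : R) = 0 := by
  rw [cosQ, show (2 * k + 1) % 4 = 2 * (k % 2) + 1 by omega]
  have := Nat.mod_lt k two_pos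
  interval_cases k % 2 <;> norm_num

theorem sinQ_two_mul_add_one (k : ℕ) : (sinQ (2 * k + 1) : R) = (-1) ^ k := by
  rw [neg_one_pow_eq_pow_mod_two, sinQ, show (2 * k + 1) % 4 = 2 * (k % 2) + 1 by omega]
  have := Nat.mod_lt k two_pos
  interval_cases k % 2 <;> norm_num

variable {N : ℕ}

theorem sinQ_sq_of_odd (hN : Odd N) : (sinQ N : R) ^ 2 = 1 := by
  obtain ⟨k, rfl⟩ := hN
  rw [sinQ_two_mul_add_one, ← pow_mul, mul_comm, pow_mul]; norm_num

theorem cosQ_sub_of_odd (hN : Odd N) {n : ℕ} (h : n ≤ N) :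
    (cosQ (N - n) : R) = sinQ N * sinQ n := by
  obtain ⟨k, rfl⟩ := hN
  rw [cosQ_sub h, cosQ_two_mul_add_one, zero_mul, zero_add]

theorem sinQ_sub_of_odd (hN : Odd N) {n : ℕ} (h : n ≤ N) :
    (sinQ (N - n) : R) = sinQ N * cosQ n := by
  obtain ⟨k, rfl⟩ := hN
  rw [sinQ_sub h, cosQ_two_mul_add_one, zero_mul, sub_zero]

variable {n : ℕ}

theorem cosQ_of_odd (h : n % 2 = 1) : (cosQ n : R) = 0 := by
  obtain ⟨k, rfl⟩ : ∃ k, n = 2 * k + 1 := ⟨n / 2, by omega⟩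
  exact cosQ_two_mul_add_one k

theorem sinQ_of_even (h : n % 2 = 0) : (sinQ n : R) = 0 := by
  obtain ⟨k, rfl⟩ : ∃ k, n = 2 * k := ⟨n / 2, by omega⟩
  exact sinQ_two_mul k

theorem neg_one_pow_div_two_of_even (h : n % 2 = 0) : (-1 : R) ^ (n / 2) = cosQ n := by
  obtain ⟨k, rfl⟩ : ∃ k, n = 2 * k := ⟨n / 2, by omega⟩
  rw [Nat.mul_div_cancel_left k two_pos, cosQ_two_mul]

theorem neg_one_pow_succ_div_two_of_odd (h : n % 2 = 1) :
    (-1 : R) ^ ((n + 1) / 2) = -sinQ n := by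
  obtain ⟨k, rfl⟩ : ∃ k, n = 2 * k + 1 := ⟨n / 2, by omega⟩
  rw [show (2 * k + 1 + 1) / 2 = k + 1 by omega, sinQ_two_mul_add_one, pow_succ, mul_neg_one]

end QuarterTurn

section OddRange

variable {M : Type*} [AddCommMonoid M] {N : ℕ}

theorem sum_Ioo_eq_sum_Ioc_add_sub (hN : Odd N) (F : ℕ → M) :
    ∑ n ∈ Ioo 0 N, F n = ∑ n ∈ Ioc 0 (N / 2), (F n + F (N - n)) := by
  obtain ⟨h, rfl⟩ := hN
  rw [sum_add_distrib, ← sum_filter_add_sum_filter_not (Ioo 0 _) (· ≤ h)]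
  congr 1
  · exact sum_nbij' id id (by simp; omega) (by simp; omega) (by simp) (by simp) (by simp)
  · exact sum_nbij' (2 * h + 1 - ·) (2 * h + 1 - ·) (by simp; omega) (by simp; omega)
      (by simp; omega) (by simp; omega) fun n hn => by
        simp only [mem_filter, mem_Ioo] at hn; rw [Nat.sub_sub_self (by omega)]

theorem sum_Ioo_eq_sum_Ioc_two_mul_add (hN : Odd N) (F : ℕ → M) :
    ∑ n ∈ Ioo 0 N, F n = ∑ n ∈ Ioc 0 (N / 2), (F (2 * n) + F (N - 2 * n)) := by
  obtain ⟨h, rfl⟩ := hN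
  rw [sum_add_distrib, ← sum_filter_add_sum_filter_not (Ioo 0 _) (· % 2 = 0)]
  congr 1
  · exact sum_nbij' (· / 2) (2 * ·) (by simp; omega) (by simp; omega) (by simp; omega)
      (by simp) (fun n hn => by simp at hn; rw [Nat.mul_div_cancel' (by omega)])
  · exact sum_nbij' (fun n => (2 * h + 1 - n) / 2) (2 * h + 1 - 2 * ·) (by simp; omega)
      (by simp; omega) (by simp; omega) (by simp; omega) (fun n hn => by simp at hn; congr 1; omega)

end OddRange

section PairSums

variable {R : Type*} [CommSemiring R] (N : ℕ)

def pairsLt : Finset (ℕ × ℕ) := (Ioo 0 N ×ˢ Ioo 0 N).filter fun x => x.2 < x.1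

def pairsAddLt : Finset (ℕ × ℕ) := (Ioo 0 N ×ˢ Ioo 0 N).filter fun x => x.1 + x.2 < N

variable {N}

@[simp] theorem mem_pairsLt {x : ℕ × ℕ} :
    x ∈ pairsLt N ↔ 0 < x.2 ∧ x.2 < x.1 ∧ x.1 < N := by
  simp only [pairsLt, mem_filter, mem_product, mem_Ioo]; omega

@[simp] theorem mem_pairsAddLt {x : ℕ × ℕ} :
    x ∈ pairsAddLt N ↔ 0 < x.1 ∧ 0 < x.2 ∧ x.1 + x.2 < N := by
  simp only [pairsAddLt, mem_filter, mem_product, mem_Ioo]; omega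

variable (N)

theorem sum_Ioo_mul_sum_Ioo_eq_pairsLt (a b : ℕ → R) :
    (∑ n ∈ Ioo 0 N, a n) * ∑ n ∈ Ioo 0 N, b n =
      ∑ x ∈ pairsLt N, a x.1 * b x.2 + ∑ x ∈ pairsLt N, b x.1 * a x.2 +
        ∑ n ∈ Ioo 0 N, a n * b n := by
  have hsplit : ∀ x : ℕ × ℕ, a x.1 * b x.2 = (if x.2 < x.1 then a x.1 * b x.2 else 0) +
      (if x.1 < x.2 then a x.1 * b x.2 else 0) + (if x.1 = x.2 then a x.1 * b x.2 else 0) := by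
    intro x
    rcases lt_trichotomy x.1 x.2 with h | h | h
    · simp [h, h.ne, h.not_gt]
    · simp [h]
    · simp [h, h.ne', h.not_gt]
  have hswap : ∑ x ∈ Ioo 0 N ×ˢ Ioo 0 N with x.1 < x.2, a x.1 * b x.2 =
      ∑ x ∈ pairsLt N, b x.1 * a x.2 :=
    sum_nbij' Prod.swap Prod.swap (by simp; omega) (by simp; omega) (by simp) (by simp)
      (fun x _ => mul_comm _ _)
  have hdiag : ∑ x ∈ Ioo 0 N ×ˢ Ioo 0 N with x.1 = x.2, a x.1 * b x.2 =
      ∑ n ∈ Ioo 0 N, a n * b n := by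
    refine sum_nbij' Prod.fst (fun n => (n, n)) (by simp +contextual) (by simp) ?_ (by simp) ?_
    · simp only [mem_filter, Prod.ext_iff]; tauto
    · simp only [mem_filter, and_imp]
      exact fun x _ h => by rw [h]
  rw [sum_mul_sum, ← sum_product', sum_congr rfl fun x _ => hsplit x, sum_add_distrib,
    sum_add_distrib, ← sum_filter, ← sum_filter, ← sum_filter, hswap, hdiag, pairsLt]

theorem sum_Ioo_mul_sum_Ioo_eq_pairsAddLt (a b : ℕ → R) :
    (∑ n ∈ Ioo 0 N, a n) * ∑ n ∈ Ioo 0 N, b n =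
      ∑ x ∈ pairsAddLt N, a x.1 * b x.2 + ∑ x ∈ pairsAddLt N, a (N - x.1) * b (N - x.2) +
        ∑ n ∈ Ioo 0 N, a (N - n) * b n := by
  have hsplit : ∀ x : ℕ × ℕ, a x.1 * b x.2 = (if x.1 + x.2 < N then a x.1 * b x.2 else 0) +
      (if N < x.1 + x.2 then a x.1 * b x.2 else 0) +
      (if x.1 + x.2 = N then a x.1 * b x.2 else 0) := by
    intro x
    rcases lt_trichotomy (x.1 + x.2) N with h | h | h
    · simp [h, h.ne, h.not_gt]
    · simp [h]
    · simp [h, h.ne', h.not_gt]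
  have hreflect : ∑ x ∈ Ioo 0 N ×ˢ Ioo 0 N with N < x.1 + x.2, a x.1 * b x.2 =
      ∑ x ∈ pairsAddLt N, a (N - x.1) * b (N - x.2) := by
    refine sum_nbij' (fun x => (N - x.1, N - x.2)) (fun x => (N - x.1, N - x.2))
      (by simp; omega) (by simp; omega) ?_ ?_ ?_
    · simp only [mem_filter, mem_product, mem_Ioo, Prod.ext_iff]; omega
    · simp only [mem_pairsAddLt, Prod.ext_iff]; omega
    · simp only [mem_filter, mem_product, mem_Ioo]
      intro x hx
      rw [Nat.sub_sub_self (by omega), Nat.sub_sub_self (by omega)]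
  have hdiag : ∑ x ∈ Ioo 0 N ×ˢ Ioo 0 N with x.1 + x.2 = N, a x.1 * b x.2 =
      ∑ n ∈ Ioo 0 N, a (N - n) * b n := by
    refine sum_nbij' Prod.snd (fun n => (N - n, n)) (by simp; omega) (by simp; omega) ?_
      (by simp) ?_
    · intro x hx
      simp only [mem_filter, mem_product, mem_Ioo] at hx
      exact Prod.ext (by simp; omega) rfl
    · simp only [mem_filter, mem_product, mem_Ioo]
      intro x hx
      rw [show N - x.2 = x.1 by omega]
  rw [sum_mul_sum, ← sum_product', sum_congr rfl fun x _ => hsplit x, sum_add_distrib,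
    sum_add_distrib, ← sum_filter, ← sum_filter, ← sum_filter, hreflect, hdiag, pairsAddLt]

end PairSums

section SumsModP

variable {p : ℕ}

theorem ZMod.natCast_self_sub {n : ℕ} (h : n ≤ p) : ((p - n : ℕ) : ZMod p) = -n := by
  rw [Nat.cast_sub h, ZMod.natCast_self, zero_sub]

variable [hp : Fact p.Prime]

theorem ZMod.natCast_ne_zero_of_lt {n : ℕ} (h0 : 0 < n) (h : n < p) : (n : ZMod p) ≠ 0 := by
  rw [Ne, ZMod.natCast_eq_zero_iff]
  exact fun hdvd => absurd (Nat.le_of_dvd h0 hdvd) (by omega)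

theorem ZMod.two_ne_zero_of_ne_two (hp2 : p ≠ 2) : (2 : ZMod p) ≠ 0 := by
  simpa using ZMod.natCast_ne_zero_of_lt (p := p) (n := 2) two_pos
    (lt_of_le_of_ne hp.out.two_le (Ne.symm hp2))

theorem ZMod.eq_zero_of_eq_neg (hp2 : p ≠ 2) {x : ZMod p} (h : x = -x) : x = 0 := by
  have h2x : (2 : ZMod p) * x = 0 := by linear_combination h
  exact (mul_eq_zero.1 h2x).resolve_left (ZMod.two_ne_zero_of_ne_two hp2)

theorem sum_Ioo_natCast_eq_sum_univ {M : Type*} [AddCommMonoid M] (g : ZMod p → M)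
    (hg : g 0 = 0) : ∑ n ∈ Ioo 0 p, g n = ∑ x, g x := by
  rw [← sum_erase univ hg]
  refine sum_nbij' (fun n => (n : ZMod p)) ZMod.val ?_ (by simp [ZMod.val_lt]) ?_ ?_
    (fun _ _ => rfl)
  · intro n hn
    rw [mem_Ioo] at hn
    exact mem_erase.2 ⟨ZMod.natCast_ne_zero_of_lt hn.1 hn.2, mem_univ _⟩
  · simp only [mem_Ioo]
    exact fun n hn => ZMod.val_cast_of_lt hn.2
  · simp

def sumInv (f : ℕ → ZMod p) : ZMod p := ∑ n ∈ Ioo 0 p, f n / n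

def sumInvSq (f : ℕ → ZMod p) : ZMod p := ∑ n ∈ Ioo 0 p, f n / n ^ 2

def sumInvLt (f g : ℕ → ZMod p) : ZMod p := ∑ x ∈ pairsLt p, f x.1 * g x.2 / (x.1 * x.2)

def sumInvAddLt (f g : ℕ → ZMod p) : ZMod p :=
  ∑ x ∈ pairsAddLt p, f x.1 * g x.2 / (x.1 * x.2)

theorem sumInvLt_const_mul_left (a : ZMod p) (f g : ℕ → ZMod p) :
    sumInvLt (fun n => a * f n) g = a * sumInvLt f g := by
  simp only [sumInvLt, mul_sum, mul_assoc, mul_div_assoc]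

theorem sumInvLt_const_mul_right (a : ZMod p) (f g : ℕ → ZMod p) :
    sumInvLt f (fun n => a * g n) = a * sumInvLt f g := by
  simp only [sumInvLt, mul_sum, mul_left_comm _ a, mul_div_assoc]

theorem sumInvAddLt_const_mul_left (a : ZMod p) (f g : ℕ → ZMod p) :
    sumInvAddLt (fun n => a * f n) g = a * sumInvAddLt f g := by
  simp only [sumInvAddLt, mul_sum, mul_assoc, mul_div_assoc]

theorem sumInvAddLt_const_mul_right (a : ZMod p) (f g : ℕ → ZMod p) :
    sumInvAddLt f (fun n => a * g n) = a * sumInvAddLt f g := by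
  simp only [sumInvAddLt, mul_sum, mul_left_comm _ a, mul_div_assoc]

theorem sumInv_const_mul (a : ZMod p) (f : ℕ → ZMod p) :
    sumInv (fun n => a * f n) = a * sumInv f := by
  simp only [sumInv, mul_sum, mul_div_assoc]

theorem sumInvSq_const_mul (a : ZMod p) (f : ℕ → ZMod p) :
    sumInvSq (fun n => a * f n) = a * sumInvSq f := by
  simp only [sumInvSq, mul_sum, mul_div_assoc]

theorem sumInvLt_add_left (f₁ f₂ g : ℕ → ZMod p) :
    sumInvLt (fun n => f₁ n + f₂ n) g = sumInvLt f₁ g + sumInvLt f₂ g := by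
  simp only [sumInvLt, ← sum_add_distrib, add_mul, add_div]

theorem sumInv_reflect {f f' : ℕ → ZMod p} (h : ∀ n < p, f (p - n) = f' n) :
    sumInv f' = -sumInv f := by
  rw [sumInv, sumInv, ← sum_neg_distrib]
  refine sum_nbij' (p - ·) (p - ·) (by simp; omega) (by simp; omega) (by simp; omega)
    (by simp; omega) fun n hn => ?_
  rw [mem_Ioo] at hn
  rw [← h n hn.2, ZMod.natCast_self_sub hn.2.le, div_neg, neg_neg]

theorem sumInvSq_reflect {f f' : ℕ → ZMod p} (h : ∀ n < p, f (p - n) = f' n) :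
    sumInvSq f' = sumInvSq f := by
  refine sum_nbij' (p - ·) (p - ·) (by simp; omega) (by simp; omega) (by simp; omega)
    (by simp; omega) fun n hn => ?_
  rw [mem_Ioo] at hn
  rw [← h n hn.2, ZMod.natCast_self_sub hn.2.le, neg_sq]

theorem sumInvLt_reflect {f f' g g' : ℕ → ZMod p} (hf : ∀ n < p, f (p - n) = f' n)
    (hg : ∀ n < p, g (p - n) = g' n) : sumInvLt f g = sumInvLt g' f' := by
  refine sum_nbij' (fun x => (p - x.2, p - x.1)) (fun x => (p - x.2, p - x.1))
    (by simp; omega) (by simp; omega) ?_ ?_ fun x hx => ?_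
  all_goals simp only [mem_pairsLt] at *
  · exact fun x hx => Prod.ext (by simp; omega) (by simp; omega)
  · exact fun x hx => Prod.ext (by simp; omega) (by simp; omega)
  · rw [← hf _ (by omega), ← hg _ (by omega), Nat.sub_sub_self (by omega),
      Nat.sub_sub_self (by omega), ZMod.natCast_self_sub (by omega),
      ZMod.natCast_self_sub (by omega)]
    ring

theorem sumInvAddLt_comm (f g : ℕ → ZMod p) : sumInvAddLt f g = sumInvAddLt g f :=
  sum_nbij' Prod.swap Prod.swap (by simp; omega) (by simp; omega) (by simp) (by simp)
    fun x _ => by simp only [Prod.fst_swap, Prod.snd_swap]; ring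

theorem sumInvLt_add_sumInvLt (f g : ℕ → ZMod p) :
    sumInvLt f g + sumInvLt g f + sumInvSq (fun n => f n * g n) = sumInv f * sumInv g := by
  rw [sumInv, sumInv, sum_Ioo_mul_sum_Ioo_eq_pairsLt]
  simp only [sumInvLt, sumInvSq, div_mul_div_comm, sq]

theorem sumInvAddLt_add_sumInvAddLt_reflect {f f' g g' : ℕ → ZMod p}
    (hf : ∀ n < p, f (p - n) = f' n) (hg : ∀ n < p, g (p - n) = g' n) :
    sumInvAddLt f g + sumInvAddLt f' g' = sumInv f * sumInv g + sumInvSq (fun n => f' n * g n) := by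
  have hdiag : ∑ n ∈ Ioo 0 p, f (p - n) / ((p - n : ℕ) : ZMod p) * (g n / n) =
      -sumInvSq (fun n => f' n * g n) := by
    rw [sumInvSq, ← sum_neg_distrib]
    refine sum_congr rfl fun n hn => ?_
    rw [mem_Ioo] at hn
    rw [hf n hn.2, ZMod.natCast_self_sub hn.2.le]
    ring
  have hrefl : ∑ x ∈ pairsAddLt p, f (p - x.1) / ((p - x.1 : ℕ) : ZMod p) *
      (g (p - x.2) / ((p - x.2 : ℕ) : ZMod p)) = sumInvAddLt f' g' := by
    refine sum_congr rfl fun x hx => ?_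
    rw [mem_pairsAddLt] at hx
    rw [hf _ (by omega), hg _ (by omega), ZMod.natCast_self_sub (by omega),
      ZMod.natCast_self_sub (by omega)]
    ring
  rw [sumInv, sumInv, sum_Ioo_mul_sum_Ioo_eq_pairsAddLt, hdiag, hrefl]
  simp only [sumInvAddLt, div_mul_div_comm]
  ring

theorem sum_pairsAddLt_eq_sumInvLt_add (f g : ℕ → ZMod p) :
    ∑ x ∈ pairsAddLt p, f (x.1 + x.2) * g x.2 / (x.1 * x.2) =
      sumInvLt f g + ∑ x ∈ pairsLt p, f x.1 * g (x.1 - x.2) / (x.1 * x.2) := by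
  have hshift : ∑ x ∈ pairsAddLt p, f (x.1 + x.2) * g x.2 / (x.1 * x.2) =
      ∑ x ∈ pairsLt p, f x.1 * g x.2 / ((x.1 - x.2 : ℕ) * x.2) := by
    refine sum_nbij' (fun x => (x.1 + x.2, x.2)) (fun x => (x.1 - x.2, x.2))
      (by simp; omega) (by simp; omega) ?_ ?_ fun x _ => by simp
    all_goals simp only [mem_pairsLt, mem_pairsAddLt]
    · exact fun x hx => Prod.ext (by simp) rfl
    · exact fun x hx => Prod.ext (by simp; omega) rfl
  have hflip : ∑ x ∈ pairsLt p, f x.1 * g x.2 / ((x.1 - x.2 : ℕ) * x.1) =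
      ∑ x ∈ pairsLt p, f x.1 * g (x.1 - x.2) / (x.1 * x.2) := by
    refine sum_nbij' (fun x => (x.1, x.1 - x.2)) (fun x => (x.1, x.1 - x.2))
      (by simp; omega) (by simp; omega) ?_ ?_ fun x hx => ?_
    all_goals simp only [mem_pairsLt] at *
    · exact fun x hx => Prod.ext rfl (by simp; omega)
    · exact fun x hx => Prod.ext rfl (by simp; omega)
    · rw [Nat.sub_sub_self hx.2.1.le]
      ring
  -- partial fractions: `1/((m-n)n) = 1/(mn) + 1/((m-n)m)`
  have hsplit : ∑ x ∈ pairsLt p, f x.1 * g x.2 / ((x.1 - x.2 : ℕ) * x.2) = sumInvLt f g +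
      ∑ x ∈ pairsLt p, f x.1 * g x.2 / ((x.1 - x.2 : ℕ) * x.1) := by
    rw [sumInvLt, ← sum_add_distrib]
    refine sum_congr rfl fun x hx => ?_
    rw [mem_pairsLt] at hx
    have hm := ZMod.natCast_ne_zero_of_lt (p := p) (by omega) hx.2.2
    have hn := ZMod.natCast_ne_zero_of_lt (p := p) hx.1 (by omega)
    have hd := ZMod.natCast_ne_zero_of_lt (p := p) (Nat.sub_pos_of_lt hx.2.1) (by omega)
    rw [Nat.cast_sub hx.2.1.le] at hd ⊢
    field_simp
    ring
  rw [hshift, hsplit, hflip]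

end SumsModP

section FermatQuotient

variable {p : ℕ} [hp : Fact p.Prime]

theorem ZMod.natCast_choose_pred_s15 {j : ℕ} (hj : j < p) :
    (((p - 1).choose j : ℕ) : ZMod p) = (-1) ^ j := by
  induction j with
  | zero => simp
  | succ j ih =>
    have hpascal : p.choose (j + 1) = (p - 1).choose j + (p - 1).choose (j + 1) := by
      rw [← Nat.choose_succ_succ', Nat.sub_add_cancel hp.out.one_le]
    have hzero : ((p.choose (j + 1) : ℕ) : ZMod p) = 0 :=
      (ZMod.natCast_eq_zero_iff _ _).2 (hp.out.dvd_choose_self j.succ_ne_zero hj)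
    rw [hpascal, Nat.cast_add, ih (by omega)] at hzero
    rw [pow_succ]
    linear_combination hzero

theorem ZMod.natCast_choose_div_self_s15 {k : ℕ} (h0 : 0 < k) (hk : k < p) :
    ((p.choose k / p : ℕ) : ZMod p) = -(-1) ^ k / k := by
  have hmul : p.choose k / p * k = (p - 1).choose (k - 1) := by
    have h := Nat.add_one_mul_choose_eq (p - 1) (k - 1)
    rw [Nat.sub_add_cancel hp.out.one_le, Nat.sub_add_cancel h0] at h
    apply Nat.eq_of_mul_eq_mul_left hp.out.pos
    rw [h, ← mul_assoc, Nat.mul_div_cancel' (hp.out.dvd_choose_self h0.ne' hk)]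
  rw [eq_div_iff (ZMod.natCast_ne_zero_of_lt h0 hk), ← Nat.cast_mul, hmul,
    ZMod.natCast_choose_pred_s15 (by omega)]
  obtain ⟨j, rfl⟩ : ∃ j, k = j + 1 := ⟨k - 1, by omega⟩
  simp [pow_succ]

theorem sum_choose_div_self (hp2 : p ≠ 2) :
    ∑ k ∈ Ioo 0 p, p.choose k / p = 2 * ((2 ^ (p - 1) - 1) / p) := by
  have hfermat : p ∣ 2 ^ (p - 1) - 1 := by
    rw [← ZMod.natCast_eq_zero_iff, Nat.cast_sub Nat.one_le_two_pow, Nat.cast_pow,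
      Nat.cast_ofNat, ZMod.pow_card_sub_one_eq_one (ZMod.two_ne_zero_of_ne_two hp2), Nat.cast_one,
      sub_self]
  have hsum : ∑ k ∈ Ioo 0 p, p.choose k + 2 = 2 ^ p := by
    rw [← Nat.sum_range_choose, sum_range_succ, range_eq_Ico,
      ← add_sum_erase _ _ (left_mem_Ico.2 hp.out.pos), Ico_erase_left, Nat.choose_zero_right,
      Nat.choose_self]
    ring
  have hpow : 2 ^ p = 2 * 2 ^ (p - 1) := by
    rw [← pow_succ', Nat.sub_add_cancel hp.out.one_le]
  apply Nat.eq_of_mul_eq_mul_left hp.out.pos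
  rw [mul_sum, sum_congr rfl fun k hk => Nat.mul_div_cancel' (hp.out.dvd_choose_self
    (mem_Ioo.1 hk).1.ne' (mem_Ioo.1 hk).2), mul_left_comm, Nat.mul_div_cancel' hfermat]
  have := Nat.one_le_two_pow (n := p - 1)
  omega

theorem sumInv_neg_one_pow (hp2 : p ≠ 2) : sumInv (fun n => (-1 : ZMod p) ^ n) = -(2 * qp p) := by
  have hcast := congrArg (Nat.cast : ℕ → ZMod p) (sum_choose_div_self hp2)
  rw [Nat.cast_sum, Nat.cast_mul, Nat.cast_ofNat, ← qp] at hcast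
  rw [← hcast, sumInv, ← sum_neg_distrib]
  refine sum_congr rfl fun k hk => ?_
  rw [ZMod.natCast_choose_div_self_s15 (mem_Ioo.1 hk).1 (mem_Ioo.1 hk).2, neg_div, neg_neg]

end FermatQuotient

section Evaluation

variable {p : ℕ} [hp : Fact p.Prime]

theorem sumInv_one (hp2 : p ≠ 2) : sumInv (1 : ℕ → ZMod p) = 0 :=
  ZMod.eq_zero_of_eq_neg hp2 (sumInv_reflect fun _ _ => rfl)

theorem sumInvSq_one (hp5 : 5 ≤ p) : sumInvSq (1 : ℕ → ZMod p) = 0 := by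
  have hcard : 2 < Fintype.card (ZMod p) - 1 := by rw [ZMod.card]; omega
  simp only [sumInvSq, Pi.one_apply, one_div, ← inv_pow]
  rw [sum_Ioo_natCast_eq_sum_univ (fun x => x⁻¹ ^ 2) (by simp)]
  exact (Equiv.sum_comp (Equiv.inv (ZMod p)) fun x => x ^ 2).trans
    (FiniteField.sum_pow_lt_card_sub_one (K := ZMod p) 2 hcard)

theorem sumInvSq_neg_one_pow (hp2 : p ≠ 2) : sumInvSq (fun n => (-1 : ZMod p) ^ n) = 0 := by
  have hodd := hp.out.odd_of_ne_two hp2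
  have h := sumInvSq_reflect (f := fun n => (-1 : ZMod p) ^ n) (f' := fun n => -1 * (-1) ^ n)
    fun n hn => by rw [neg_one_pow_sub_of_le hn.le, hodd.neg_one_pow, mul_comm]
  rw [sumInvSq_const_mul, neg_one_mul] at h
  exact ZMod.eq_zero_of_eq_neg hp2 h.symm

theorem sumInvSq_sinQ_sq (hp5 : 5 ≤ p) : sumInvSq (fun n => (sinQ n : ZMod p) ^ 2) = 0 := by
  have h2 : 2 * sumInvSq (fun n => (sinQ n : ZMod p) ^ 2) =
      sumInvSq 1 - sumInvSq (fun n => (-1 : ZMod p) ^ n) := by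
    simp only [sumInvSq, mul_sum, ← sum_sub_distrib, ← mul_div_assoc, two_mul_sinQ_sq, sub_div,
      Pi.one_apply]
  rw [sumInvSq_one hp5, sumInvSq_neg_one_pow (by omega), sub_zero] at h2
  exact (mul_eq_zero.1 h2).resolve_left (ZMod.two_ne_zero_of_ne_two (by omega))

theorem sumInv_sinQ (hp2 : p ≠ 2) : sumInv (sinQ : ℕ → ZMod p) = -(sinQ p * sumInv cosQ) := by
  have h := sumInv_reflect fun n hn =>
    sinQ_sub_of_odd (R := ZMod p) (hp.out.odd_of_ne_two hp2) hn.le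
  rw [sumInv_const_mul] at h
  linear_combination h

theorem four_mul_sumInv_cosQ (hp2 : p ≠ 2) :
    4 * sumInv (cosQ : ℕ → ZMod p) = sumInv fun n => (-1) ^ n := by
  have hodd := hp.out.odd_of_ne_two hp2
  rw [sumInv, sumInv, sum_Ioo_eq_sum_Ioc_two_mul_add hodd, sum_Ioo_eq_sum_Ioc_add_sub hodd,
    mul_sum]
  refine sum_congr rfl fun k hk => ?_
  rw [mem_Ioc] at hk
  have hk0 := ZMod.natCast_ne_zero_of_lt (p := p) hk.1 (by omega)
  have h2 := ZMod.two_ne_zero_of_ne_two hp2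
  rw [cosQ_sub_of_odd hodd (by omega), sinQ_two_mul, cosQ_two_mul,
    neg_one_pow_sub_of_le (by omega), hodd.neg_one_pow, ZMod.natCast_self_sub (by omega),
    ZMod.natCast_self_sub (by omega)]
  push_cast
  field_simp
  ring

theorem two_mul_sumInv_cosQ (hp2 : p ≠ 2) : 2 * sumInv (cosQ : ℕ → ZMod p) = -qp p := by
  have h := four_mul_sumInv_cosQ hp2
  rw [sumInv_neg_one_pow hp2] at h
  exact mul_left_cancel₀ (ZMod.two_ne_zero_of_ne_two hp2) (by linear_combination h)

theorem two_mul_sumInvLt_sinQ_sinQ (hp5 : 5 ≤ p) :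
    2 * sumInvLt (sinQ : ℕ → ZMod p) sinQ = sumInv cosQ ^ 2 := by
  have h := sumInvLt_add_sumInvLt (sinQ : ℕ → ZMod p) sinQ
  have hD : sumInvSq (fun n => (sinQ n : ZMod p) * sinQ n) = 0 := by
    simpa only [← sq] using sumInvSq_sinQ_sq hp5
  rw [hD, sumInv_sinQ (by omega)] at h
  linear_combination h +
    sumInv cosQ ^ 2 * sinQ_sq_of_odd (R := ZMod p) (hp.out.odd_of_ne_two (by omega))

theorem sumInvLt_cosQ_cosQ (hp2 : p ≠ 2) :
    sumInvLt (cosQ : ℕ → ZMod p) cosQ = sumInvLt sinQ sinQ := by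
  have hodd := hp.out.odd_of_ne_two hp2
  rw [sumInvLt_reflect (fun n hn => cosQ_sub_of_odd hodd hn.le)
    (fun n hn => cosQ_sub_of_odd hodd hn.le), sumInvLt_const_mul_left,
    sumInvLt_const_mul_right, ← mul_assoc, ← sq, sinQ_sq_of_odd hodd, one_mul]

theorem two_mul_sumInvAddLt_cosQ_sinQ (hp5 : 5 ≤ p) :
    2 * sumInvAddLt (cosQ : ℕ → ZMod p) sinQ = sumInv cosQ * sumInv sinQ := by
  have hodd := hp.out.odd_of_ne_two (by omega : p ≠ 2)
  have h := sumInvAddLt_add_sumInvAddLt_reflect (fun n hn => cosQ_sub_of_odd hodd hn.le)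
    (fun n hn => sinQ_sub_of_odd (R := ZMod p) hodd hn.le)
  have hD : sumInvSq (fun n => sinQ p * sinQ n * (sinQ n : ZMod p)) = 0 := by
    simpa only [mul_assoc, ← sq, sumInvSq_const_mul, mul_eq_zero] using
      Or.inr (sumInvSq_sinQ_sq hp5)
  rw [hD, sumInvAddLt_const_mul_left, sumInvAddLt_const_mul_right, sumInvAddLt_comm sinQ] at h
  linear_combination h - sumInvAddLt cosQ sinQ * sinQ_sq_of_odd (R := ZMod p) hodd

theorem sumInvLt_sinQ_one (hp2 : p ≠ 2) :
    sumInvLt (sinQ : ℕ → ZMod p) 1 = sumInvAddLt cosQ sinQ := by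
  have h := sum_pairsAddLt_eq_sumInvLt_add (sinQ : ℕ → ZMod p) 1
  have hl : ∑ x ∈ pairsAddLt p, (sinQ (x.1 + x.2) : ZMod p) * (1 : ℕ → ZMod p) x.2 /
      (x.1 * x.2) = sumInvAddLt sinQ cosQ + sumInvAddLt cosQ sinQ := by
    rw [sumInvAddLt, sumInvAddLt, ← sum_add_distrib]
    refine sum_congr rfl fun x _ => ?_
    rw [sinQ_add, Pi.one_apply]
    ring
  have hr : ∑ x ∈ pairsLt p, (sinQ x.1 : ZMod p) * (1 : ℕ → ZMod p) (x.1 - x.2) /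
      (x.1 * x.2) = sumInvLt sinQ 1 := by
    simp only [sumInvLt, Pi.one_apply]
  rw [hl, hr, sumInvAddLt_comm sinQ] at h
  exact mul_left_cancel₀ (ZMod.two_ne_zero_of_ne_two hp2) (by linear_combination -h)

theorem sumInvLt_one_cosQ (hp2 : p ≠ 2) :
    sumInvLt 1 (cosQ : ℕ → ZMod p) = sinQ p * sumInvLt sinQ 1 := by
  rw [sumInvLt_reflect (f := 1) (f' := 1) (fun _ _ => rfl)
    (fun n hn => cosQ_sub_of_odd (hp.out.odd_of_ne_two hp2) hn.le), sumInvLt_const_mul_left]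

theorem sumInvAddLt_one_cosQ :
    sumInvAddLt 1 (cosQ : ℕ → ZMod p) =
      sumInvLt 1 cosQ + (sumInvLt cosQ cosQ + sumInvLt sinQ sinQ) := by
  have h := sum_pairsAddLt_eq_sumInvLt_add (1 : ℕ → ZMod p) cosQ
  have hr : ∑ x ∈ pairsLt p, (1 : ℕ → ZMod p) x.1 * cosQ (x.1 - x.2) / (x.1 * x.2) =
      sumInvLt cosQ cosQ + sumInvLt sinQ sinQ := by
    rw [sumInvLt, sumInvLt, ← sum_add_distrib]
    refine sum_congr rfl fun x hx => ?_
    rw [cosQ_sub (mem_pairsLt.1 hx).2.1.le, Pi.one_apply]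
    ring
  rwa [hr] at h

theorem sumInvAddLt_one_sinQ :
    sumInvAddLt 1 (sinQ : ℕ → ZMod p) =
      sumInvLt 1 sinQ + (sumInvLt sinQ cosQ - sumInvLt cosQ sinQ) := by
  have h := sum_pairsAddLt_eq_sumInvLt_add (1 : ℕ → ZMod p) sinQ
  have hr : ∑ x ∈ pairsLt p, (1 : ℕ → ZMod p) x.1 * sinQ (x.1 - x.2) / (x.1 * x.2) =
      sumInvLt sinQ cosQ - sumInvLt cosQ sinQ := by
    rw [sumInvLt, sumInvLt, ← sum_sub_distrib]
    refine sum_congr rfl fun x hx => ?_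
    rw [sinQ_sub (mem_pairsLt.1 hx).2.1.le, Pi.one_apply]
    ring
  rwa [hr] at h

theorem sumInvAddLt_one_sinQ_add_sumInvAddLt_one_cosQ (hp2 : p ≠ 2) :
    sumInvAddLt 1 (sinQ : ℕ → ZMod p) + sinQ p * sumInvAddLt 1 cosQ = sumInvSq sinQ := by
  have h := sumInvAddLt_add_sumInvAddLt_reflect (f := 1) (f' := 1) (fun _ _ => rfl)
    (fun n hn => sinQ_sub_of_odd (R := ZMod p) (hp.out.odd_of_ne_two hp2) hn.le)
  simpa only [sumInvAddLt_const_mul_right, sumInv_one hp2, zero_mul, zero_add, Pi.one_apply,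
    one_mul] using h

theorem sumInvAddLt_cosQ_cosQ_add_sumInvAddLt_sinQ_sinQ (hp2 : p ≠ 2) :
    sumInvAddLt (cosQ : ℕ → ZMod p) cosQ + sumInvAddLt sinQ sinQ = sumInv cosQ ^ 2 := by
  have hodd := hp.out.odd_of_ne_two hp2
  have h := sumInvAddLt_add_sumInvAddLt_reflect
    (fun n hn => cosQ_sub_of_odd (R := ZMod p) hodd hn.le) (fun n hn => cosQ_sub_of_odd hodd hn.le)
  have hD : sumInvSq (fun n => sinQ p * sinQ n * (cosQ n : ZMod p)) = 0 := by
    simp only [sumInvSq, mul_assoc, mul_comm (sinQ _) (cosQ _), cosQ_mul_sinQ, mul_zero,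
      zero_div, sum_const_zero]
  rw [hD, sumInvAddLt_const_mul_left, sumInvAddLt_const_mul_right] at h
  linear_combination h - sumInvAddLt sinQ sinQ * sinQ_sq_of_odd (R := ZMod p) hodd

theorem two_mul_sumInvLt_cosQ_neg_one_pow :
    2 * sumInvLt (cosQ : ℕ → ZMod p) (fun n => (-1) ^ n) =
      sumInvAddLt cosQ cosQ + sumInvAddLt sinQ sinQ := by
  have h := sum_pairsAddLt_eq_sumInvLt_add (cosQ : ℕ → ZMod p) fun n => (-1) ^ n
  have hl : ∑ x ∈ pairsAddLt p, (cosQ (x.1 + x.2) : ZMod p) * (-1) ^ x.2 / (x.1 * x.2) =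
      sumInvAddLt cosQ cosQ + sumInvAddLt sinQ sinQ := by
    rw [sumInvAddLt, sumInvAddLt, ← sum_add_distrib]
    refine sum_congr rfl fun x _ => ?_
    rw [cosQ_add, sub_mul, mul_assoc, mul_assoc, cosQ_mul_neg_one_pow, sinQ_mul_neg_one_pow]
    ring
  have hr : ∑ x ∈ pairsLt p, (cosQ x.1 : ZMod p) * (-1) ^ (x.1 - x.2) / (x.1 * x.2) =
      sumInvLt cosQ fun n => (-1) ^ n := by
    refine sum_congr rfl fun x hx => ?_
    rw [neg_one_pow_sub_of_le (mem_pairsLt.1 hx).2.1.le, mul_left_comm, cosQ_mul_neg_one_pow]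
    ring
  rw [hl, hr] at h
  linear_combination -h

theorem sumInvLt_cosQ_neg_one_pow (hp2 : p ≠ 2) :
    sumInvLt (cosQ : ℕ → ZMod p) (fun n => (-1) ^ n) =
      -(sinQ p * sumInvLt (fun n => (-1) ^ n) sinQ) := by
  have hodd := hp.out.odd_of_ne_two hp2
  rw [sumInvLt_reflect (fun n hn => cosQ_sub_of_odd hodd hn.le)
    (g' := fun n => -1 * (-1) ^ n) (fun n hn => by
      rw [neg_one_pow_sub_of_le hn.le, hodd.neg_one_pow, mul_comm]),
    sumInvLt_const_mul_left, sumInvLt_const_mul_right]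
  ring

theorem two_mul_sumInvLt_neg_one_pow_sinQ (hp2 : p ≠ 2) :
    2 * sumInvLt (fun n => (-1 : ZMod p) ^ n) sinQ = -(sinQ p * sumInv cosQ ^ 2) := by
  have h := two_mul_sumInvLt_cosQ_neg_one_pow (p := p)
  rw [sumInvAddLt_cosQ_cosQ_add_sumInvAddLt_sinQ_sinQ hp2, sumInvLt_cosQ_neg_one_pow hp2] at h
  linear_combination -sinQ p * h -
    2 * sumInvLt (fun n => (-1 : ZMod p) ^ n) sinQ *
      sinQ_sq_of_odd (R := ZMod p) (hp.out.odd_of_ne_two hp2)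

theorem two_mul_sumInvAddLt_one_cosQ (hp5 : 5 ≤ p) :
    2 * sumInvAddLt 1 (cosQ : ℕ → ZMod p) = sumInv cosQ ^ 2 := by
  have hp2 : p ≠ 2 := by omega
  linear_combination 2 * sumInvAddLt_one_cosQ (p := p) + 2 * sumInvLt_one_cosQ hp2 +
    2 * sinQ p * sumInvLt_sinQ_one hp2 + sinQ p * two_mul_sumInvAddLt_cosQ_sinQ hp5 +
    2 * sumInvLt_cosQ_cosQ hp2 + 2 * two_mul_sumInvLt_sinQ_sinQ hp5 +
    sinQ p * sumInv cosQ * sumInv_sinQ hp2 -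
    sumInv cosQ ^ 2 * sinQ_sq_of_odd (R := ZMod p) (hp.out.odd_of_ne_two hp2)

theorem sumInvAddLt_one_sinQ_eq_neg (hp5 : 5 ≤ p) :
    sumInvAddLt 1 (sinQ : ℕ → ZMod p) = -sumInvLt 1 sinQ := by
  have hp2 : p ≠ 2 := by omega
  have hstuffle := sumInvLt_add_sumInvLt (1 : ℕ → ZMod p) sinQ
  simp only [Pi.one_apply, one_mul, sumInv_one hp2, zero_mul] at hstuffle
  refine mul_left_cancel₀ (ZMod.two_ne_zero_of_ne_two hp2) ?_
  linear_combination 2 * sumInvAddLt_one_sinQ_add_sumInvAddLt_one_cosQ hp2 + 2 * hstuffle -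
    sinQ p * two_mul_sumInvAddLt_one_cosQ hp5 - 2 * sumInvLt_sinQ_one hp2 -
    two_mul_sumInvAddLt_cosQ_sinQ hp5 - sumInv cosQ * sumInv_sinQ hp2

theorem sumInvLt_cosQ_sinQ_add_sumInvLt_sinQ_cosQ (hp2 : p ≠ 2) :
    sumInvLt (cosQ : ℕ → ZMod p) sinQ + sumInvLt sinQ cosQ =
      2 * sumInvLt (fun n => (-1) ^ n) sinQ := by
  have h := sumInvLt_add_sumInvLt (cosQ : ℕ → ZMod p) sinQ
  simp only [cosQ_mul_sinQ, sumInvSq, zero_div, sum_const_zero, add_zero] at h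
  linear_combination h - two_mul_sumInvLt_neg_one_pow_sinQ hp2 + sumInv cosQ * sumInv_sinQ hp2

theorem sumInvLt_cosQ_sinQ (hp5 : 5 ≤ p) :
    sumInvLt (cosQ : ℕ → ZMod p) sinQ =
      sumInvLt 1 sinQ + sumInvLt (fun n => (-1) ^ n) sinQ := by
  refine mul_left_cancel₀ (ZMod.two_ne_zero_of_ne_two (by omega : p ≠ 2)) ?_
  linear_combination sumInvLt_cosQ_sinQ_add_sumInvLt_sinQ_cosQ (by omega : p ≠ 2) +
    sumInvAddLt_one_sinQ (p := p) - sumInvAddLt_one_sinQ_eq_neg hp5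

theorem sumInvLt_sinQ_cosQ (hp5 : 5 ≤ p) :
    sumInvLt (sinQ : ℕ → ZMod p) cosQ =
      sumInvLt (fun n => (-1) ^ n) sinQ - sumInvLt 1 sinQ := by
  refine mul_left_cancel₀ (ZMod.two_ne_zero_of_ne_two (by omega : p ≠ 2)) ?_
  linear_combination sumInvLt_cosQ_sinQ_add_sumInvLt_sinQ_cosQ (by omega : p ≠ 2) -
    sumInvAddLt_one_sinQ (p := p) + sumInvAddLt_one_sinQ_eq_neg hp5

theorem sumInvLt_sinQ_sinQ (hp5 : 5 ≤ p) :
    sumInvLt (sinQ : ℕ → ZMod p) sinQ = qp p ^ 2 / 8 := by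
  have h2 := ZMod.two_ne_zero_of_ne_two (by omega : p ≠ 2)
  rw [eq_div_iff (by simpa [show (8 : ZMod p) = 2 ^ 3 by norm_num] using pow_ne_zero 3 h2)]
  linear_combination 4 * two_mul_sumInvLt_sinQ_sinQ hp5 +
    (2 * sumInv cosQ - qp p) * two_mul_sumInv_cosQ (by omega : p ≠ 2)

end Evaluation

section Parity

variable {p : ℕ} [hp : Fact p.Prime]

theorem sum_filter_sum_filter_eq_sumInvLt {P Q : ℕ → Prop} [DecidablePred P] [DecidablePred Q]
    (S : ℕ → ℕ → ZMod p) {f g : ℕ → ZMod p} (hf : ∀ m, ¬P m → f m = 0)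
    (hg : ∀ n, ¬Q n → g n = 0)
    (hS : ∀ m n, P m → Q n → S m n = f m * g n * (m * n : ZMod p)⁻¹) :
    ∑ m ∈ (Ioo 0 p).filter P, ∑ n ∈ (Ioo 0 m).filter Q, S m n = sumInvLt f g := by
  rw [sumInvLt, sum_finset_product (pairsLt p) (Ioo 0 p) (fun m => Ioo 0 m) (by simp; omega),
    ← sum_filter_of_ne (s := Ioo 0 p) (p := P) fun m _ hne =>
      by_contra fun hP => hne (by simp [hf m hP])]
  refine sum_congr rfl fun m hm => ?_
  rw [← sum_filter_of_ne (s := Ioo 0 m) (p := Q) fun n _ hne =>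
    by_contra fun hQ => hne (by simp [hg n hQ])]
  refine sum_congr rfl fun n hn => ?_
  rw [hS m n (mem_filter.1 hm).2 (mem_filter.1 hn).2, div_eq_mul_inv]

theorem tpbb_eq_sumInvLt : tpbb p = sumInvLt sinQ sinQ := by
  refine sum_filter_sum_filter_eq_sumInvLt _ (fun m h => sinQ_of_even (by omega))
    (fun n h => sinQ_of_even (by omega)) fun m n hm hn => ?_
  rw [neg_one_pow_succ_div_two_of_odd hm, neg_one_pow_succ_div_two_of_odd hn]
  ring

theorem zeta2pbb_eq_sumInvLt : zeta2pbb p = sumInvLt cosQ cosQ :=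
  sum_filter_sum_filter_eq_sumInvLt _ (fun m h => cosQ_of_odd (by omega))
    (fun n h => cosQ_of_odd (by omega)) fun m n hm hn => by
      rw [neg_one_pow_div_two_of_even hm, neg_one_pow_div_two_of_even hn]

theorem Tpbb_eq_neg_sumInvLt : Tpbb p = -sumInvLt cosQ sinQ := by
  rw [← neg_one_mul, ← sumInvLt_const_mul_right]
  exact sum_filter_sum_filter_eq_sumInvLt _ (fun m h => cosQ_of_odd (by omega))
    (fun n h => by rw [sinQ_of_even (by omega), mul_zero]) fun m n hm hn => by
      rw [neg_one_pow_div_two_of_even hm, neg_one_pow_succ_div_two_of_odd hn]; ring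

theorem Spbb_eq_neg_sumInvLt : Spbb p = -sumInvLt sinQ cosQ := by
  rw [← neg_one_mul, ← sumInvLt_const_mul_left]
  exact sum_filter_sum_filter_eq_sumInvLt _ (fun m h => by rw [sinQ_of_even (by omega), mul_zero])
    (fun n h => cosQ_of_odd (by omega)) fun m n hm hn => by
      rw [neg_one_pow_succ_div_two_of_odd hm, neg_one_pow_div_two_of_even hn]; ring

-- The even and odd indicators are `(1 ± (-1)ⁿ)/2`.
theorem two_mul_Tp1b (hp2 : p ≠ 2) :
    2 * Tp1b p = -(sumInvLt 1 sinQ + sumInvLt (fun n => (-1) ^ n) sinQ) := by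
  have h2 := ZMod.two_ne_zero_of_ne_two hp2
  have h : Tp1b p = sumInvLt (fun m => 2⁻¹ * ((1 : ℕ → ZMod p) m + (-1) ^ m))
      (fun n => -1 * sinQ n) := by
    refine sum_filter_sum_filter_eq_sumInvLt _ (fun m h => ?_)
      (fun n h => by rw [sinQ_of_even (by omega), mul_zero]) fun m n hm hn => ?_
    · rw [Pi.one_apply, Odd.neg_one_pow ⟨m / 2, by omega⟩]; ring
    · rw [neg_one_pow_succ_div_two_of_odd hn, Pi.one_apply, Even.neg_one_pow ⟨m / 2, by omega⟩]
      field_simp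
      ring
  simp only [h, sumInvLt_const_mul_left, sumInvLt_add_left, sumInvLt_const_mul_right]
  field_simp

theorem two_mul_tp1b (hp2 : p ≠ 2) :
    2 * tp1b p = -(sumInvLt 1 sinQ - sumInvLt (fun n => (-1) ^ n) sinQ) := by
  have h2 := ZMod.two_ne_zero_of_ne_two hp2
  have h : tp1b p = sumInvLt (fun m => 2⁻¹ * ((1 : ℕ → ZMod p) m + -1 * (-1) ^ m))
      (fun n => -1 * sinQ n) := by
    refine sum_filter_sum_filter_eq_sumInvLt _ (fun m h => ?_)
      (fun n h => by rw [sinQ_of_even (by omega), mul_zero]) fun m n hm hn => ?_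
    · rw [Pi.one_apply, Even.neg_one_pow ⟨m / 2, by omega⟩]; ring
    · rw [neg_one_pow_succ_div_two_of_odd hn, Pi.one_apply, Odd.neg_one_pow ⟨m / 2, by omega⟩]
      field_simp
      ring
  simp only [h, sumInvLt_const_mul_left, sumInvLt_add_left, sumInvLt_const_mul_right]
  field_simp
  ring

end Parity

/-- For a prime `p ≥ 5`, in `ℤ/pℤ`: `T_p(1̄,1̄) = 2T_p(1,1̄)`,
`S_p(1̄,1̄) = -2t_p(1,1̄)`, and `t_p(1̄,1̄) = ζ^{(2)}_p(1̄,1̄) = q_p²/8`. -/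
theorem stmt15 (p : ℕ) [Fact p.Prime] (hp : 5 ≤ p) :
    Tpbb p = 2 * Tp1b p ∧ Spbb p = -2 * tp1b p ∧
    tpbb p = zeta2pbb p ∧ tpbb p = qp p ^ 2 / 8 := by
  have hp2 : p ≠ 2 := by omega
  refine ⟨?_, ?_, ?_, ?_⟩
  · rw [Tpbb_eq_neg_sumInvLt, two_mul_Tp1b hp2, sumInvLt_cosQ_sinQ hp]
  · rw [Spbb_eq_neg_sumInvLt, neg_mul, two_mul_tp1b hp2, sumInvLt_sinQ_cosQ hp, neg_neg, neg_sub]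
  · rw [tpbb_eq_sumInvLt, zeta2pbb_eq_sumInvLt, sumInvLt_cosQ_cosQ hp2]
  · rw [tpbb_eq_sumInvLt, sumInvLt_sinQ_sinQ hp]
end

section
/- Let w ≥ d ≥ 1 be integers with w odd and d even, and let p be an odd prime. Then in ℤ/pℤ: Σ over all compositions s = (s_1,…,s_d) of positive integers with s_1 + … + s_d = w of T_p(s) equals 0, and likewise Σ over the same set of compositions of S_p(s) equals 0. -/
open Finset

/-- The flip map `m ↦ (j ↦ p - m (rev j))` on tuples. -/
def flipMap (p d : ℕ) (hp : 0 < p) (m : Fin d → Fin p) : Fin d → Fin p :=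
  fun j => ⟨(p - (m j.rev : ℕ)) % p, Nat.mod_lt _ hp⟩

lemma flipMap_val {p d : ℕ} (hp : 0 < p) (m : Fin d → Fin p)
    (hpos : ∀ j, 0 < (m j : ℕ)) (j : Fin d) :
    ((flipMap p d hp m j : ℕ)) = p - (m j.rev : ℕ) := by
  have h1 : 0 < (m j.rev : ℕ) := hpos j.rev
  have h2 : (m j.rev : ℕ) < p := (m j.rev).isLt
  simp only [flipMap]
  exact Nat.mod_eq_of_lt (by omega)

lemma flipMap_pos {p d : ℕ} (hp : 0 < p) (m : Fin d → Fin p)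
    (hpos : ∀ j, 0 < (m j : ℕ)) (j : Fin d) :
    0 < ((flipMap p d hp m j : ℕ)) := by
  rw [flipMap_val hp m hpos]
  have h2 : (m j.rev : ℕ) < p := (m j.rev).isLt
  omega

lemma flipMap_flipMap {p d : ℕ} (hp : 0 < p) (m : Fin d → Fin p)
    (hpos : ∀ j, 0 < (m j : ℕ)) :
    flipMap p d hp (flipMap p d hp m) = m := by
  funext j
  apply Fin.ext
  rw [flipMap_val hp _ (flipMap_pos hp m hpos), flipMap_val hp m hpos, Fin.rev_rev]
  have h1 : 0 < (m j : ℕ) := hpos j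
  have h2 : (m j : ℕ) < p := (m j).isLt
  omega

/-- Key sign computation: summing the reversed exponents over a flip-closed set
picks up the sign `(-1)^(∑ s j)`. -/
lemma flip_sum_s17 (p d : ℕ) [hpf : Fact p.Prime] (F : Finset (Fin d → Fin p))
    (hpos : ∀ m ∈ F, ∀ j, 0 < (m j : ℕ))
    (hcl : ∀ m ∈ F, flipMap p d hpf.out.pos m ∈ F) (s : Fin d → ℕ) :
    ∑ m ∈ F, ∏ j, ((m j : ℕ) : ZMod p)⁻¹ ^ (s j.rev)
      = (-1) ^ (∑ j, s j) * ∑ m ∈ F, ∏ j, ((m j : ℕ) : ZMod p)⁻¹ ^ (s j) := by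
  have hp := hpf.out.pos
  rw [Finset.mul_sum]
  refine Finset.sum_nbij' (flipMap p d hp) (flipMap p d hp) hcl hcl
    (fun m hm => flipMap_flipMap hp m (hpos m hm))
    (fun m hm => flipMap_flipMap hp m (hpos m hm)) ?_
  intro m hm
  have hmp := hpos m hm
  have hcast : ∀ j : Fin d, ((flipMap p d hp m j : ℕ) : ZMod p)
      = -((m j.rev : ℕ) : ZMod p) := by
    intro j
    rw [flipMap_val hp m hmp, Nat.cast_sub (le_of_lt (m j.rev).isLt),
      ZMod.natCast_self, zero_sub]
  calc ∏ j, ((m j : ℕ) : ZMod p)⁻¹ ^ (s j.rev)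
      = ∏ j, ((m j.rev : ℕ) : ZMod p)⁻¹ ^ (s j) := by
        refine Fintype.prod_equiv Fin.revPerm _ _ (fun j => ?_)
        simp [Fin.rev_rev]
    _ = (-1) ^ (∑ j, s j) * ∏ j, ((flipMap p d hp m j : ℕ) : ZMod p)⁻¹ ^ (s j) := by
        have : ∀ j : Fin d, ((flipMap p d hp m j : ℕ) : ZMod p)⁻¹ ^ (s j)
            = (-1) ^ (s j) * ((m j.rev : ℕ) : ZMod p)⁻¹ ^ (s j) := by
          intro j
          rw [hcast, inv_neg, neg_pow]
        rw [Finset.prod_congr rfl (fun j _ => this j), Finset.prod_mul_distrib,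
          Finset.prod_pow_eq_pow_sum, ← mul_assoc, ← pow_add]
        have : Even (∑ j, s j + ∑ j, s j) := ⟨∑ j, s j, rfl⟩
        rw [this.neg_one_pow, one_mul]

/-- `T_p` with reversed exponents. -/
lemma Tp_rev (p d : ℕ) [hpf : Fact p.Prime] (hp2 : p ≠ 2) (hde : Even d)
    (s : Fin d → ℕ) :
    Tp p d (s ∘ Fin.rev) = (-1) ^ (∑ j, s j) * Tp p d s := by
  have hp := hpf.out.pos
  have hodd : p % 2 = 1 := Nat.odd_iff.mp (hpf.out.odd_of_ne_two hp2)
  obtain ⟨k, hk⟩ := hde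
  unfold Tp
  refine flip_sum_s17 p d _ (fun m hm j => ?_) (fun m hm => ?_) s
  · exact ((Finset.mem_filter.mp hm).2).2.1 j
  · obtain ⟨-, hdec, hmp, hpar⟩ := Finset.mem_filter.mp hm
    refine Finset.mem_filter.mpr ⟨Finset.mem_univ _, ?_, fun j => flipMap_pos hp m hmp j, ?_⟩
    · intro i j hij
      rw [flipMap_val hp m hmp, flipMap_val hp m hmp]
      have h1 : (m i.rev : ℕ) < (m j.rev : ℕ) :=
        hdec j.rev i.rev (Fin.rev_lt_rev.mpr hij)
      have h2 : (m j.rev : ℕ) < p := (m j.rev).isLt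
      omega
    · intro j
      rw [flipMap_val hp m hmp]
      have h1 := hpar j.rev
      have h2 : (j.rev : ℕ) = d - (j + 1) := Fin.val_rev j
      have h3 : (m j.rev : ℕ) < p := (m j.rev).isLt
      have h4 : 0 < (m j.rev : ℕ) := hmp j.rev
      have h5 : (j : ℕ) < d := j.isLt
      omega

/-- `S_p` with reversed exponents. -/
lemma Sp_rev (p d : ℕ) [hpf : Fact p.Prime] (hp2 : p ≠ 2) (hde : Even d)
    (s : Fin d → ℕ) :
    Sp p d (s ∘ Fin.rev) = (-1) ^ (∑ j, s j) * Sp p d s := by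
  have hp := hpf.out.pos
  have hodd : p % 2 = 1 := Nat.odd_iff.mp (hpf.out.odd_of_ne_two hp2)
  obtain ⟨k, hk⟩ := hde
  unfold Sp
  refine flip_sum_s17 p d _ (fun m hm j => ?_) (fun m hm => ?_) s
  · exact ((Finset.mem_filter.mp hm).2).2.1 j
  · obtain ⟨-, hdec, hmp, hpar⟩ := Finset.mem_filter.mp hm
    refine Finset.mem_filter.mpr ⟨Finset.mem_univ _, ?_, fun j => flipMap_pos hp m hmp j, ?_⟩
    · intro i j hij
      rw [flipMap_val hp m hmp, flipMap_val hp m hmp]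
      have h1 : (m i.rev : ℕ) < (m j.rev : ℕ) :=
        hdec j.rev i.rev (Fin.rev_lt_rev.mpr hij)
      have h2 : (m j.rev : ℕ) < p := (m j.rev).isLt
      omega
    · intro j
      rw [flipMap_val hp m hmp]
      have h1 := hpar j.rev
      have h2 : (j.rev : ℕ) = d - (j + 1) := Fin.val_rev j
      have h3 : (m j.rev : ℕ) < p := (m j.rev).isLt
      have h4 : 0 < (m j.rev : ℕ) := hmp j.rev
      have h5 : (j : ℕ) < d := j.isLt
      omega

lemma sum_rev_eq {d : ℕ} (s : Fin d → ℕ) : ∑ j, s (Fin.rev j) = ∑ j, s j :=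
  Fintype.sum_equiv Fin.revPerm _ _ (fun _ => rfl)

/-- Generic vanishing lemma. -/
lemma vanish (p d w : ℕ) [hpf : Fact p.Prime] (hp2 : p ≠ 2) (hw : Odd w)
    (f : (Fin d → ℕ) → ZMod p)
    (hf : ∀ s, f (s ∘ Fin.rev) = (-1) ^ (∑ j, s j) * f s) :
    (∑ s ∈ (Fintype.piFinset fun _ : Fin d => Finset.Icc 1 w).filter
        (fun s => ∑ j, s j = w), f s) = 0 := by
  set A := (Fintype.piFinset fun _ : Fin d => Finset.Icc 1 w).filter
      (fun s => ∑ j, s j = w) with hA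
  have hmemA : ∀ s ∈ A, s ∘ Fin.rev ∈ A := by
    intro s hs
    obtain ⟨h1, h2⟩ := Finset.mem_filter.mp hs
    refine Finset.mem_filter.mpr ⟨?_, ?_⟩
    · rw [Fintype.mem_piFinset] at h1 ⊢
      exact fun j => h1 j.rev
    · show ∑ j, s (Fin.rev j) = w
      rw [sum_rev_eq]; exact h2
  have hrev : ∑ s ∈ A, f (s ∘ Fin.rev) = ∑ s ∈ A, f s := by
    refine Finset.sum_nbij' (fun s => s ∘ Fin.rev) (fun s => s ∘ Fin.rev)
      hmemA hmemA ?_ ?_ (fun s _ => rfl)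
    · intro s _; funext j; simp [Function.comp, Fin.rev_rev]
    · intro s _; funext j; simp [Function.comp, Fin.rev_rev]
  have hneg : ∑ s ∈ A, f s = -∑ s ∈ A, f s := by
    conv_lhs => rw [← hrev]
    rw [Finset.sum_congr rfl (fun s hs => by
      rw [hf s, (Finset.mem_filter.mp hs).2, hw.neg_one_pow, neg_one_mul])]
    rw [Finset.sum_neg_distrib]
  have h2 : (2 : ZMod p) ≠ 0 := by
    intro h
    have : (p : ℕ) ∣ 2 := by
      have := (ZMod.natCast_eq_zero_iff 2 p).mp (by exact_mod_cast h)
      exact this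
    exact hp2 ((Nat.prime_dvd_prime_iff_eq hpf.out Nat.prime_two).mp this)
  have h3 : (2 : ZMod p) * ∑ s ∈ A, f s = 0 := by
    rw [two_mul]
    nth_rewrite 1 [hneg]
    ring
  exact (mul_eq_zero.mp h3).resolve_left h2

/-- For integers `w ≥ d ≥ 1` with `w` odd and `d` even, and an odd prime `p`,
the sum of `T_p(s)` over all compositions `s = (s_1, …, s_d)` of `w` into `d`
positive parts vanishes in `ℤ/pℤ`, and likewise for `S_p`. -/
theorem stmt17 (p w d : ℕ) (hp : p.Prime) (hp2 : p ≠ 2) (hd : 1 ≤ d) (hdw : d ≤ w)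
    (hw : Odd w) (hde : Even d) :
    (∑ s ∈ (Fintype.piFinset fun _ : Fin d => Finset.Icc 1 w).filter
        (fun s => ∑ j, s j = w), Tp p d s) = 0 ∧
    (∑ s ∈ (Fintype.piFinset fun _ : Fin d => Finset.Icc 1 w).filter
        (fun s => ∑ j, s j = w), Sp p d s) = 0 := by
  haveI : Fact p.Prime := ⟨hp⟩
  exact ⟨vanish p d w hp2 hw (Tp p d) (Tp_rev p d hp2 hde),
    vanish p d w hp2 hw (Sp p d) (Sp_rev p d hp2 hde)⟩
end
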